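/- arXiv:2407.16185 — 6 statements merged into one kernel-verified Lean document; each statement's English description precedes it below -/
import Mathlib

section
/- Let p, q ≥ 0 and let f ∈ H_{p,q} be a harmonic bihomogeneous polynomial of bidegree (p, q). If the associated function ev f vanishes at every point of the unit sphere S³ = {(z, w) ∈ ℂ² : |z|² + |w|² = 1}, then f = 0. In other words, the restriction map from H_{p,q} to functions on S³ is injective. -/
/- Work in the polynomial ring `A4 = ℂ[z, w, z̄, w̄]`, realized as
`MvPolynomial (Fin 4) ℂ` with variables `0 ↔ z`, `1 ↔ w`, `2 ↔ z̄`, `3 ↔ w̄`. -/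

open MvPolynomial MeasureTheory

noncomputable section

abbrev A4 := MvPolynomial (Fin 4) ℂ

/-- `Z₁ f := w̄·∂_z f − z̄·∂_w f` -/
def Z1 (f : A4) : A4 := X 3 * pderiv 0 f - X 2 * pderiv 1 f

/-- `Z₁̄ f := w·∂_{z̄} f − z·∂_{w̄} f` -/
def Z1c (f : A4) : A4 := X 1 * pderiv 2 f - X 0 * pderiv 3 f

/-- The Laplacian `Δ f := ∂_z ∂_{z̄} f + ∂_w ∂_{w̄} f` -/
def Lap (f : A4) : A4 := pderiv 0 (pderiv 2 f) + pderiv 1 (pderiv 3 f)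

/-- weight giving degree in the variables (z, w) -/
def wHol : Fin 4 → ℕ := ![1, 1, 0, 0]

/-- weight giving degree in the variables (z̄, w̄) -/
def wAnti : Fin 4 → ℕ := ![0, 0, 1, 1]

/-- `f` is bihomogeneous of bidegree `(p, q)`: homogeneous of degree `p` in `(z, w)`
and of degree `q` in `(z̄, w̄)`. -/
def IsBihom (p q : ℕ) (f : A4) : Prop :=
  IsWeightedHomogeneous wHol f p ∧ IsWeightedHomogeneous wAnti f q

/- `ℂ² ≅ ℝ⁴` realized as `EuclideanSpace ℝ (Fin 4)`, so that the unit sphere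
`Metric.sphere 0 1` is `S³ = {(z,w) : |z|² + |w|² = 1}`. -/
abbrev E4 := EuclideanSpace ℝ (Fin 4)

/-- first complex coordinate `z` of a point of `ℂ² ≅ ℝ⁴` -/
def zC (x : E4) : ℂ := ⟨x 0, x 1⟩

/-- second complex coordinate `w` of a point of `ℂ² ≅ ℝ⁴` -/
def wC (x : E4) : ℂ := ⟨x 2, x 3⟩

/-- `ev f (z, w) := f (z, w, conj z, conj w)` -/
def evP (f : A4) (x : E4) : ℂ :=
  MvPolynomial.eval (![zC x, wC x, (starRingEnd ℂ) (zC x), (starRingEnd ℂ) (wC x)]) f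

/-- the surface measure `σ` on the unit sphere `S³`, induced from Lebesgue measure on `ℝ⁴ ≅ ℂ²` -/
def sphMeasure : Measure (Metric.sphere (0 : E4) 1) := (volume : Measure E4).toSphere


/-- A complex polynomial vanishing at all real points is zero. -/
lemma real_points_zero (n : ℕ) : ∀ (g : MvPolynomial (Fin n) ℂ),
    (∀ x : Fin n → ℝ, eval (fun i => (x i : ℂ)) g = 0) → g = 0 := by
  induction n with
  | zero =>
    intro g h
    obtain ⟨c, rfl⟩ := C_surjective (Fin 0) g
    have := h 0
    rw [eval_C] at this
    rw [this, map_zero]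
  | succ n ih =>
    intro g h
    have key : ∀ (x : Fin n → ℝ),
        Polynomial.map (eval fun i => ((x i : ℂ))) (finSuccEquiv ℂ n g) = 0 := by
      intro x
      apply Polynomial.eq_zero_of_infinite_isRoot
      apply Set.Infinite.mono (s := Set.range (fun t : ℝ => (t : ℂ)))
      · rintro _ ⟨t, rfl⟩
        show Polynomial.IsRoot _ _
        rw [Polynomial.IsRoot, ← eval_eq_eval_mv_eval']
        have hfun : (Fin.cons ((t : ℝ) : ℂ) fun i => ((x i : ℝ) : ℂ))
            = (fun i => (((Fin.cons t x : Fin (n+1) → ℝ) i : ℝ) : ℂ)) := by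
          funext i
          refine Fin.cases ?_ ?_ i <;> simp
        show eval (Fin.cons ((t : ℝ) : ℂ) fun i => ((x i : ℝ) : ℂ)) g = 0
        rw [hfun]
        exact h (Fin.cons t x)
      · exact Set.infinite_range_of_injective Complex.ofReal_injective
    have hP : finSuccEquiv ℂ n g = 0 := by
      apply Polynomial.ext
      intro k
      simp only [Polynomial.coeff_zero]
      apply ih
      intro x
      have h2 := congrArg (fun p => Polynomial.coeff p k) (key x)
      simpa [Polynomial.coeff_map] using h2
    exact (finSuccEquiv ℂ n).injective
      (by rw [hP, map_zero] : finSuccEquiv ℂ n g = finSuccEquiv ℂ n 0)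

/-- the complexifying substitution z = x₀ + i x₁, w = x₂ + i x₃, z̄ = x₀ − i x₁, w̄ = x₂ − i x₃ -/
def subC : Fin 4 → A4 :=
  ![X 0 + C Complex.I * X 1, X 2 + C Complex.I * X 3,
    X 0 - C Complex.I * X 1, X 2 - C Complex.I * X 3]

lemma eval_aeval_subC (f : A4) (u : Fin 4 → ℂ) :
    eval u (aeval subC f) = eval (fun i => eval u (subC i)) f := by
  rw [aeval_def, eval_eval₂]
  have : (eval u).comp (algebraMap ℂ A4) = RingHom.id ℂ := by
    ext c
    simp [algebraMap_eq]
  rw [this, eval₂_id]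

/-- if a harmonic bihomogeneous polynomial vanishes identically on the unit
sphere `S³`, then it is the zero polynomial (injectivity of restriction to `S³` on `H_{p,q}`). -/
theorem restriction_to_sphere_injective_on_Hpq (p q : ℕ) (f : A4)
    (hf : IsBihom p q f) (hharm : Lap f = 0)
    (hvanish : ∀ x ∈ Metric.sphere (0 : E4) 1, evP f x = 0) :
    f = 0 := by
  -- Step 1: scaling law from bihomogeneity
  have hscale : ∀ (c : ℂ) (v : Fin 4 → ℂ),
      eval (fun i => c * v i) f = c ^ (p + q) * eval v f := by
    have hdeg : ∀ d : Fin 4 →₀ ℕ, coeff d f ≠ 0 → ∑ i ∈ d.support, d i = p + q := by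
      intro d hd
      have h1 := hf.1 hd
      have h2 := hf.2 hd
      rw [Finsupp.weight_apply, Finsupp.sum] at h1 h2
      have hw : ∀ i : Fin 4, wHol i + wAnti i = 1 := by decide
      calc ∑ i ∈ d.support, d i
          = ∑ i ∈ d.support, (d i • wHol i + d i • wAnti i) := by
            refine Finset.sum_congr rfl fun i _ => ?_
            rw [← smul_add, hw i, smul_eq_mul, mul_one]
        _ = (∑ i ∈ d.support, d i • wHol i) + ∑ i ∈ d.support, d i • wAnti i :=
            Finset.sum_add_distrib
        _ = p + q := by rw [h1, h2]
    intro c v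
    rw [eval_eq, eval_eq, Finset.mul_sum]
    refine Finset.sum_congr rfl fun d hd => ?_
    have hsum := hdeg d (mem_support_iff.mp hd)
    simp_rw [mul_pow]
    rw [Finset.prod_mul_distrib, Finset.prod_pow_eq_pow_sum, hsum]
    ring
  -- Step 2: evP f vanishes everywhere on ℝ⁴
  have hall : ∀ y : E4, evP f y = 0 := by
    have hz : ∀ (t : ℝ) (x : E4), zC (t • x) = (t : ℂ) * zC x := by
      intro t x
      simp [zC, Complex.ext_iff, PiLp.smul_apply, smul_eq_mul, Complex.mul_re, Complex.mul_im]
    have hw : ∀ (t : ℝ) (x : E4), wC (t • x) = (t : ℂ) * wC x := by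
      intro t x
      simp [wC, Complex.ext_iff, PiLp.smul_apply, smul_eq_mul, Complex.mul_re, Complex.mul_im]
    have hsm : ∀ (t : ℝ) (x : E4), evP f (t • x) = (t : ℂ) ^ (p + q) * evP f x := by
      intro t x
      have hvec : ![zC (t • x), wC (t • x), (starRingEnd ℂ) (zC (t • x)),
          (starRingEnd ℂ) (wC (t • x))]
          = fun i => (t : ℂ) * ![zC x, wC x, (starRingEnd ℂ) (zC x),
              (starRingEnd ℂ) (wC x)] i := by
        funext i
        fin_cases i <;> simp [hz, hw, map_mul, Complex.conj_ofReal]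
      rw [evP, hvec, hscale]
      rfl
    intro y
    rcases eq_or_ne y 0 with rfl | hy
    · have hx : EuclideanSpace.single (0 : Fin 4) (1 : ℝ) ∈ Metric.sphere (0 : E4) 1 := by
        simp [mem_sphere_zero_iff_norm, EuclideanSpace.norm_single]
      have := hsm 0 (EuclideanSpace.single (0 : Fin 4) (1 : ℝ))
      rw [zero_smul, hvanish _ hx, mul_zero] at this
      exact this
    · set x := ‖y‖⁻¹ • y with hxdef
      have hny : ‖y‖ ≠ 0 := norm_ne_zero_iff.mpr hy
      have hx : x ∈ Metric.sphere (0 : E4) 1 := by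
        rw [mem_sphere_zero_iff_norm, hxdef, norm_smul, norm_inv, norm_norm,
          inv_mul_cancel₀ hny]
      have hyx : y = ‖y‖ • x := by
        rw [hxdef, smul_smul, mul_inv_cancel₀ hny, one_smul]
      rw [hyx, hsm, hvanish _ hx, mul_zero]
  -- Step 3: complexify and conclude f = 0
  set g : A4 := aeval subC f with hg
  have hgr : ∀ x : Fin 4 → ℝ, eval (fun i => (x i : ℂ)) g = 0 := by
    intro x
    rw [hg, eval_aeval_subC]
    have hx : (fun i => eval (fun i => (x i : ℂ)) (subC i))
        = ![zC (WithLp.toLp 2 x), wC (WithLp.toLp 2 x), (starRingEnd ℂ) (zC (WithLp.toLp 2 x)),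
          (starRingEnd ℂ) (wC (WithLp.toLp 2 x))] := by
      funext i
      fin_cases i <;>
        simp [subC, zC, wC, Complex.ext_iff, Complex.mul_re, Complex.mul_im]
    rw [hx]
    exact hall (WithLp.toLp 2 x)
  have hg0 : g = 0 := real_points_zero 4 g hgr
  apply MvPolynomial.funext
  intro v
  have hu : eval (![(v 0 + v 2)/2, (v 0 - v 2)/(2*Complex.I),
      (v 1 + v 3)/2, (v 1 - v 3)/(2*Complex.I)]) g = 0 := by rw [hg0, map_zero]
  rw [hg, eval_aeval_subC] at hu
  have hv : (fun i => eval (![(v 0 + v 2)/2, (v 0 - v 2)/(2*Complex.I),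
      (v 1 + v 3)/2, (v 1 - v 3)/(2*Complex.I)]) (subC i)) = v := by
    funext i
    have hI := Complex.I_ne_zero
    fin_cases i <;>
      · simp [subC]
        field_simp
        ring
  rw [hv] at hu
  rw [hu, map_zero]
end
end

section
/- For all integers p, q ≥ 0 and every f ∈ H_{p,q}, one has −Z₁(Z₁̄ f) = (p + 1) q · f; that is, every harmonic bihomogeneous polynomial of bidegree (p, q) is an eigenvector of the Kohn Laplacian □_b = −Z₁ ∘ Z₁̄ with eigenvalue (p+1)q. -/
/- Work in the polynomial ring `A4 = ℂ[z, w, z̄, w̄]`, realized as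
`MvPolynomial (Fin 4) ℂ` with variables `0 ↔ z`, `1 ↔ w`, `2 ↔ z̄`, `3 ↔ w̄`. -/

open MvPolynomial MeasureTheory

noncomputable section

open Finsupp in
lemma X_mul_pderiv_monomial (i : Fin 4) (d : Fin 4 →₀ ℕ) (c : ℂ) :
    X i * pderiv i (monomial d c) = (d i : ℂ) • (monomial d c : A4) := by
  rw [pderiv_monomial]
  by_cases h : d i = 0
  · simp [h]
  · rw [X, monomial_mul, one_mul, smul_monomial]
    rw [add_comm, tsub_add_cancel_of_le (Finsupp.single_le_iff.mpr (Nat.one_le_iff_ne_zero.mpr h)),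
      smul_eq_mul, mul_comm]

open Finsupp in
lemma euler (w : Fin 4 → ℕ) (n : ℕ) (f : A4) (h : IsWeightedHomogeneous w f n) :
    ∑ i, (w i : ℂ) • (X i * pderiv i f) = (n : ℂ) • f := by
  conv_lhs => rw [f.as_sum]
  conv_rhs => rw [f.as_sum]
  simp only [map_sum, Finset.mul_sum, Finset.smul_sum]
  rw [Finset.sum_comm]
  apply Finset.sum_congr rfl
  intro d hd
  have hw : weight w d = n := h (MvPolynomial.mem_support_iff.mp hd)
  simp only [X_mul_pderiv_monomial, smul_smul, ← Finset.sum_smul]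
  congr 1
  rw [← hw, weight_apply, Finsupp.sum_fintype]
  · push_cast
    apply Finset.sum_congr rfl
    intro i _
    simp [mul_comm]
  · intro i; simp

open Finsupp in
lemma pderiv_hom (w : Fin 4 → ℕ) (j : Fin 4) (hj : w j = 0) (n : ℕ) (f : A4)
    (h : IsWeightedHomogeneous w f n) : IsWeightedHomogeneous w (pderiv j f) n := by
  have : pderiv j f ∈ weightedHomogeneousSubmodule ℂ w n := by
    rw [f.as_sum, map_sum]
    apply Submodule.sum_mem
    intro d hd
    rw [pderiv_monomial, mem_weightedHomogeneousSubmodule]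
    by_cases hdj : d j = 0
    · simp [hdj, isWeightedHomogeneous_zero]
    · apply isWeightedHomogeneous_monomial
      have h1 : (d - Finsupp.single j 1) + Finsupp.single j 1 = d :=
        tsub_add_cancel_of_le (Finsupp.single_le_iff.mpr (Nat.one_le_iff_ne_zero.mpr hdj))
      have h2 := h (MvPolynomial.mem_support_iff.mp hd)
      have h3 := congrArg (weight w) h1
      rw [map_add] at h3
      have h4 : weight w (Finsupp.single j 1) = w j := by
        simp [Finsupp.weight_apply, Finsupp.sum_single_index]
      rw [h4, hj, add_zero] at h3
      rw [h3, h2]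
  exact this

/-- every `f ∈ H_{p,q}` is an eigenvector of the Kohn Laplacian
`□_b = −Z₁ ∘ Z₁̄` with eigenvalue `(p+1)q`. -/
theorem kohn_laplacian_eigenvalue (p q : ℕ) (f : A4)
    (hf : IsBihom p q f) (hharm : Lap f = 0) :
    -(Z1 (Z1c f)) = (((p : ℂ) + 1) * (q : ℂ)) • f := by
  obtain ⟨hp, hq⟩ := hf
  have h1 := euler wAnti q f hq
  have h2 := euler wHol p (pderiv 3 f) (pderiv_hom wHol 3 rfl p f hp)
  have h3 := euler wHol p (pderiv 2 f) (pderiv_hom wHol 2 rfl p f hp)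
  have h4 : pderiv 0 (pderiv 2 f) + pderiv 1 (pderiv 3 f) = 0 := hharm
  simp only [Fin.sum_univ_four, wAnti, wHol, Matrix.cons_val_zero, Matrix.cons_val_one,
    Matrix.head_cons, Matrix.cons_val_two, Matrix.tail_cons, Matrix.cons_val_three,
    Nat.cast_zero, Nat.cast_one, zero_smul, one_smul, zero_add, add_zero] at h1 h2 h3
  rw [smul_eq_C_mul] at h1 h2 h3 ⊢
  simp only [Z1, Z1c, map_sub, Derivation.leibniz, smul_eq_mul, pderiv_X_self,
    pderiv_X_of_ne (show (3:Fin 4) ≠ 0 by decide),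
    pderiv_X_of_ne (show (0:Fin 4) ≠ 1 by decide), pderiv_X_of_ne (show (1:Fin 4) ≠ 0 by decide),
    pderiv_X_of_ne (show (1:Fin 4) ≠ 2 by decide), pderiv_X_of_ne (show (0:Fin 4) ≠ 2 by decide),
    pderiv_X_of_ne (show (1:Fin 4) ≠ 3 by decide), pderiv_X_of_ne (show (0:Fin 4) ≠ 3 by decide),
    mul_zero, zero_mul, mul_one, one_mul, zero_add, add_zero, sub_zero]
  simp only [map_mul, map_add, map_one]
  linear_combination (1 + C (p:ℂ)) * h1 + X 3 * h2 + X 2 * h3 - (X 1 * X 3 + X 0 * X 2) * h4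
end
end

section
/- Let t be a real number, let p, q ≥ 0 be integers, and let f ∈ H_{p,q}. Then 𝒫(t) f = t² Z₁̄⁴ f − t(1+t²) [ (q−2)(p+3) + p(q+1) ] Z₁̄² f + [ (1+t²)² p q (p+1)(q+1) + t² ( (q−2)(p+3) q (p+1) + p (q+1) (q+3)(p−2) ) ] f − t(1+t²) [ q(p+1) + (q+3)(p−2) ] Z₁² f + t² Z₁⁴ f, where the integer coefficients are computed in ℤ (they may be negative). In particular, 𝒫(t) maps the span of the spaces H_{p−2j, q+2j} (j ∈ ℤ) to itself. -/
/- Work in the polynomial ring `A4 = ℂ[z, w, z̄, w̄]`, realized as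
`MvPolynomial (Fin 4) ℂ` with variables `0 ↔ z`, `1 ↔ w`, `2 ↔ z̄`, `3 ↔ w̄`. -/

open MvPolynomial MeasureTheory

noncomputable section

/-- the Kohn Laplacian `□_b = −Z₁ ∘ Z₁̄` of the standard CR sphere -/
def boxB (f : A4) : A4 := -(Z1 (Z1c f))

/-- the conjugate Kohn Laplacian `□̄_b = −Z₁̄ ∘ Z₁` -/
def boxBbar (f : A4) : A4 := -(Z1c (Z1 f))

/-- `(1−t²) Box_b(t) = □_b − t Z₁² − t Z₁̄² + t² □̄_b` -/
def D1 (t : ℝ) (f : A4) : A4 :=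
  boxB f - (t : ℂ) • Z1 (Z1 f) - (t : ℂ) • Z1c (Z1c f) + ((t : ℂ) ^ 2) • boxBbar f

/-- `(1−t²) conj-Box_b(t) = □̄_b − t Z₁² − t Z₁̄² + t² □_b` -/
def D2 (t : ℝ) (f : A4) : A4 :=
  boxBbar f - (t : ℂ) • Z1 (Z1 f) - (t : ℂ) • Z1c (Z1c f) + ((t : ℂ) ^ 2) • boxB f

/-- `𝒫(t) = (1−t²)² P(t)`, where `P(t)` is the CR Paneitz operator of the Rossi sphere `S³_t`. -/
def Pt (t : ℝ) (f : A4) : A4 :=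
  D2 t (D1 t f) + (4 * (t : ℂ)) • Z1c (Z1c f) - (4 * (t : ℂ) ^ 2) • (boxB f + boxBbar f) +
    (4 * (t : ℂ) ^ 3) • Z1 (Z1 f)

lemma pd_comm (i j : Fin 4) (f : A4) : pderiv i (pderiv j f) = pderiv j (pderiv i f) := by
  induction f using MvPolynomial.induction_on with
  | C a => simp
  | add p q hp hq => simp [hp, hq]
  | mul_X p n ih =>
      simp only [pderiv_mul, pderiv_X, map_add, ih]
      have : (pderiv i) ((Pi.single j 1 : Fin 4 → A4) n) = (pderiv j) ((Pi.single i 1 : Fin 4 → A4) n) := by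
        rcases eq_or_ne n j with rfl | h1 <;> rcases eq_or_ne n i with rfl | h2 <;>
          simp [Pi.single_apply, *]
      rw [this]
      ring

lemma xmul_pderiv_monomial (i : Fin 4) (d : Fin 4 →₀ ℕ) (c : ℂ) :
    X i * pderiv i (monomial d c) = ((d i : ℂ)) • monomial d c := by
  rw [pderiv_monomial]
  rcases Nat.eq_zero_or_pos (d i) with h | h
  · simp [h]
  · rw [X, monomial_mul, smul_monomial]
    rw [add_tsub_cancel_of_le]
    · rw [smul_eq_mul]; ring_nf
    · exact Finsupp.single_le_iff.mpr h

def E1 (f : A4) : A4 := X 0 * pderiv 0 f + X 1 * pderiv 1 f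
def E2 (f : A4) : A4 := X 2 * pderiv 2 f + X 3 * pderiv 3 f

lemma X_mul_pderiv (i : Fin 4) (f : A4) :
    X i * pderiv i f = ∑ d ∈ f.support, ((d i : ℂ)) • monomial d (coeff d f) := by
  conv_lhs => rw [f.as_sum]
  rw [map_sum, Finset.mul_sum]
  exact Finset.sum_congr rfl fun d _ => xmul_pderiv_monomial ..

lemma euler_hol {p : ℕ} {f : A4} (h : IsWeightedHomogeneous wHol f p) : E1 f = (p : ℂ) • f := by
  unfold E1
  rw [X_mul_pderiv, X_mul_pderiv, ← Finset.sum_add_distrib]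
  conv_rhs => rw [f.as_sum, Finset.smul_sum]
  refine Finset.sum_congr rfl fun d hd => ?_
  have hw := h (mem_support_iff.mp hd)
  have hdp : d 0 + d 1 = p := by
    rw [Finsupp.weight_apply, Finsupp.sum_fintype] at hw
    · simpa [Fin.sum_univ_four, wHol] using hw
    · intro; simp
  rw [← add_smul, ← Nat.cast_add, hdp]

lemma euler_anti {q : ℕ} {f : A4} (h : IsWeightedHomogeneous wAnti f q) : E2 f = (q : ℂ) • f := by
  unfold E2
  rw [X_mul_pderiv, X_mul_pderiv, ← Finset.sum_add_distrib]
  conv_rhs => rw [f.as_sum, Finset.smul_sum]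
  refine Finset.sum_congr rfl fun d hd => ?_
  have hw := h (mem_support_iff.mp hd)
  have hdp : d 2 + d 3 = q := by
    rw [Finsupp.weight_apply, Finsupp.sum_fintype] at hw
    · simpa [Fin.sum_univ_four, wAnti] using hw
    · intro; simp
  rw [← add_smul, ← Nat.cast_add, hdp]

lemma pd10 (f : A4) : pderiv 1 (pderiv 0 f) = pderiv 0 (pderiv 1 f) := pd_comm ..
lemma pd20 (f : A4) : pderiv 2 (pderiv 0 f) = pderiv 0 (pderiv 2 f) := pd_comm ..
lemma pd30 (f : A4) : pderiv 3 (pderiv 0 f) = pderiv 0 (pderiv 3 f) := pd_comm ..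
lemma pd21 (f : A4) : pderiv 2 (pderiv 1 f) = pderiv 1 (pderiv 2 f) := pd_comm ..
lemma pd31 (f : A4) : pderiv 3 (pderiv 1 f) = pderiv 1 (pderiv 3 f) := pd_comm ..
lemma pd32 (f : A4) : pderiv 3 (pderiv 2 f) = pderiv 2 (pderiv 3 f) := pd_comm ..

lemma pdX00 : pderiv (0:Fin 4) (X 0 : A4) = 1 := pderiv_X_self _
lemma pdX01 : pderiv (0:Fin 4) (X 1 : A4) = 0 := pderiv_X_of_ne (by decide)
lemma pdX02 : pderiv (0:Fin 4) (X 2 : A4) = 0 := pderiv_X_of_ne (by decide)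
lemma pdX03 : pderiv (0:Fin 4) (X 3 : A4) = 0 := pderiv_X_of_ne (by decide)
lemma pdX10 : pderiv (1:Fin 4) (X 0 : A4) = 0 := pderiv_X_of_ne (by decide)
lemma pdX11 : pderiv (1:Fin 4) (X 1 : A4) = 1 := pderiv_X_self _
lemma pdX12 : pderiv (1:Fin 4) (X 2 : A4) = 0 := pderiv_X_of_ne (by decide)
lemma pdX13 : pderiv (1:Fin 4) (X 3 : A4) = 0 := pderiv_X_of_ne (by decide)
lemma pdX20 : pderiv (2:Fin 4) (X 0 : A4) = 0 := pderiv_X_of_ne (by decide)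
lemma pdX21 : pderiv (2:Fin 4) (X 1 : A4) = 0 := pderiv_X_of_ne (by decide)
lemma pdX22 : pderiv (2:Fin 4) (X 2 : A4) = 1 := pderiv_X_self _
lemma pdX23 : pderiv (2:Fin 4) (X 3 : A4) = 0 := pderiv_X_of_ne (by decide)
lemma pdX30 : pderiv (3:Fin 4) (X 0 : A4) = 0 := pderiv_X_of_ne (by decide)
lemma pdX31 : pderiv (3:Fin 4) (X 1 : A4) = 0 := pderiv_X_of_ne (by decide)
lemma pdX32 : pderiv (3:Fin 4) (X 2 : A4) = 0 := pderiv_X_of_ne (by decide)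
lemma pdX33 : pderiv (3:Fin 4) (X 3 : A4) = 1 := pderiv_X_self _

lemma id1 (f : A4) :
    Z1 (Z1c f) = (X 0 * X 2 + X 1 * X 3) * Lap f - E2 (E1 f + f) := by
  simp only [Z1, Z1c, E1, E2, Lap, pderiv_mul, map_add, map_sub, map_mul,
    pd10, pd20, pd30, pd21, pd31, pd32, pdX00, pdX01, pdX02, pdX03, pdX10, pdX11, pdX12, pdX13, pdX20, pdX21, pdX22, pdX23, pdX30, pdX31, pdX32, pdX33, mul_zero, mul_one, zero_mul, one_mul, map_zero]
  ring

lemma id2 (f : A4) :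
    Z1c (Z1 f) = (X 0 * X 2 + X 1 * X 3) * Lap f - E1 (E2 f + f) := by
  simp only [Z1, Z1c, E1, E2, Lap, pderiv_mul, map_add, map_sub, map_mul,
    pd10, pd20, pd30, pd21, pd31, pd32, pdX00, pdX01, pdX02, pdX03, pdX10, pdX11, pdX12, pdX13, pdX20, pdX21, pdX22, pdX23, pdX30, pdX31, pdX32, pdX33, mul_zero, mul_one, zero_mul, one_mul, map_zero]
  ring

lemma comm1 (f : A4) :
    E1 (Z1 f) = Z1 (E1 f) - Z1 f := by
  simp only [Z1, Z1c, E1, E2, Lap, pderiv_mul, map_add, map_sub, map_mul,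
    pd10, pd20, pd30, pd21, pd31, pd32, pdX00, pdX01, pdX02, pdX03, pdX10, pdX11, pdX12, pdX13, pdX20, pdX21, pdX22, pdX23, pdX30, pdX31, pdX32, pdX33, mul_zero, mul_one, zero_mul, one_mul, map_zero]
  ring

lemma comm2 (f : A4) :
    E2 (Z1 f) = Z1 (E2 f) + Z1 f := by
  simp only [Z1, Z1c, E1, E2, Lap, pderiv_mul, map_add, map_sub, map_mul,
    pd10, pd20, pd30, pd21, pd31, pd32, pdX00, pdX01, pdX02, pdX03, pdX10, pdX11, pdX12, pdX13, pdX20, pdX21, pdX22, pdX23, pdX30, pdX31, pdX32, pdX33, mul_zero, mul_one, zero_mul, one_mul, map_zero]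
  ring

lemma comm3 (f : A4) :
    E1 (Z1c f) = Z1c (E1 f) + Z1c f := by
  simp only [Z1, Z1c, E1, E2, Lap, pderiv_mul, map_add, map_sub, map_mul,
    pd10, pd20, pd30, pd21, pd31, pd32, pdX00, pdX01, pdX02, pdX03, pdX10, pdX11, pdX12, pdX13, pdX20, pdX21, pdX22, pdX23, pdX30, pdX31, pdX32, pdX33, mul_zero, mul_one, zero_mul, one_mul, map_zero]
  ring

lemma comm4 (f : A4) :
    E2 (Z1c f) = Z1c (E2 f) - Z1c f := by
  simp only [Z1, Z1c, E1, E2, Lap, pderiv_mul, map_add, map_sub, map_mul,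
    pd10, pd20, pd30, pd21, pd31, pd32, pdX00, pdX01, pdX02, pdX03, pdX10, pdX11, pdX12, pdX13, pdX20, pdX21, pdX22, pdX23, pdX30, pdX31, pdX32, pdX33, mul_zero, mul_one, zero_mul, one_mul, map_zero]
  ring

lemma lap1 (f : A4) :
    Lap (Z1 f) = Z1 (Lap f) := by
  simp only [Z1, Z1c, E1, E2, Lap, pderiv_mul, map_add, map_sub, map_mul,
    pd10, pd20, pd30, pd21, pd31, pd32, pdX00, pdX01, pdX02, pdX03, pdX10, pdX11, pdX12, pdX13, pdX20, pdX21, pdX22, pdX23, pdX30, pdX31, pdX32, pdX33, mul_zero, mul_one, zero_mul, one_mul, map_zero]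
  ring

lemma lap2 (f : A4) :
    Lap (Z1c f) = Z1c (Lap f) := by
  simp only [Z1, Z1c, E1, E2, Lap, pderiv_mul, map_add, map_sub, map_mul,
    pd10, pd20, pd30, pd21, pd31, pd32, pdX00, pdX01, pdX02, pdX03, pdX10, pdX11, pdX12, pdX13, pdX20, pdX21, pdX22, pdX23, pdX30, pdX31, pdX32, pdX33, mul_zero, mul_one, zero_mul, one_mul, map_zero]
  ring

lemma Z1_smul (c : ℂ) (f : A4) : Z1 (c • f) = c • Z1 f := by
  simp only [Z1, Derivation.map_smul, _root_.map_smul, smul_sub, mul_smul_comm]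
lemma Z1c_smul (c : ℂ) (f : A4) : Z1c (c • f) = c • Z1c f := by
  simp only [Z1c, Derivation.map_smul, _root_.map_smul, smul_sub, mul_smul_comm]
lemma Z1_add (f g : A4) : Z1 (f + g) = Z1 f + Z1 g := by
  simp only [Z1, map_add]; ring
lemma Z1c_add (f g : A4) : Z1c (f + g) = Z1c f + Z1c g := by
  simp only [Z1c, map_add]; ring
lemma Z1_zero : Z1 0 = 0 := by simp [Z1]
lemma Z1c_zero : Z1c 0 = 0 := by simp [Z1c]
lemma E2_smul (c : ℂ) (f : A4) : E2 (c • f) = c • E2 f := by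
  simp only [E2, Derivation.map_smul, _root_.map_smul, smul_add, mul_smul_comm]
lemma E1_smul (c : ℂ) (f : A4) : E1 (c • f) = c • E1 f := by
  simp only [E1, Derivation.map_smul, _root_.map_smul, smul_add, mul_smul_comm]
lemma Lap_smul (c : ℂ) (f : A4) : Lap (c • f) = c • Lap f := by
  simp only [Lap, Derivation.map_smul, _root_.map_smul, smul_add]


def Eig (a b : ℂ) (f : A4) : Prop := E1 f = a • f ∧ E2 f = b • f ∧ Lap f = 0

lemma eig_Z1 {a b : ℂ} {f : A4} (h : Eig a b f) : Eig (a - 1) (b + 1) (Z1 f) := by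
  obtain ⟨h1, h2, h0⟩ := h
  refine ⟨?_, ?_, ?_⟩
  · rw [comm1, h1, Z1_smul]; module
  · rw [comm2, h2, Z1_smul]; module
  · rw [lap1, h0, Z1_zero]

lemma eig_Z1c {a b : ℂ} {f : A4} (h : Eig a b f) : Eig (a + 1) (b - 1) (Z1c f) := by
  obtain ⟨h1, h2, h0⟩ := h
  refine ⟨?_, ?_, ?_⟩
  · rw [comm3, h1, Z1c_smul]; module
  · rw [comm4, h2, Z1c_smul]; module
  · rw [lap2, h0, Z1c_zero]

lemma key1 {a b : ℂ} {f : A4} (h : Eig a b f) : Z1 (Z1c f) = (-(b * (a + 1))) • f := by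
  obtain ⟨h1, h2, h0⟩ := h
  rw [id1, h0, mul_zero, zero_sub, h1]
  rw [show (a • f + f) = (a + 1) • f by module, E2_smul, h2]
  module

lemma key2 {a b : ℂ} {f : A4} (h : Eig a b f) : Z1c (Z1 f) = (-(a * (b + 1))) • f := by
  obtain ⟨h1, h2, h0⟩ := h
  rw [id2, h0, mul_zero, zero_sub, h2]
  rw [show (b • f + f) = (b + 1) • f by module, E1_smul, h1]
  module

lemma D2_add (t : ℝ) (f g : A4) : D2 t (f + g) = D2 t f + D2 t g := by
  simp only [D2, boxB, boxBbar, Z1_add, Z1c_add, smul_add, neg_add]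
  module

lemma D2_smul (t : ℝ) (c : ℂ) (f : A4) : D2 t (c • f) = c • D2 t f := by
  simp only [D2, boxB, boxBbar, Z1_smul, Z1c_smul, smul_neg, smul_add, smul_sub, smul_smul]
  module


/-- the action of `𝒫(t) = (1−t²)² P(t)` on `f ∈ H_{p,q}`, with the
(possibly negative) integer coefficients computed in `ℤ`. -/
theorem Pt_on_Hpq (t : ℝ) (p q : ℕ) (f : A4)
    (hf : IsBihom p q f) (hharm : Lap f = 0) :
    Pt t f =
      ((t : ℂ) ^ 2) • Z1c (Z1c (Z1c (Z1c f)))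
      - ((t : ℂ) * (1 + (t : ℂ) ^ 2) *
          (((((q : ℤ) - 2) * ((p : ℤ) + 3) + (p : ℤ) * ((q : ℤ) + 1) : ℤ)) : ℂ)) •
        Z1c (Z1c f)
      + ((1 + (t : ℂ) ^ 2) ^ 2 * ((((p : ℤ) * (q : ℤ) * ((p : ℤ) + 1) * ((q : ℤ) + 1) : ℤ)) : ℂ)
          + (t : ℂ) ^ 2 *
            (((((q : ℤ) - 2) * ((p : ℤ) + 3) * (q : ℤ) * ((p : ℤ) + 1) +
                (p : ℤ) * ((q : ℤ) + 1) * ((q : ℤ) + 3) * ((p : ℤ) - 2) : ℤ)) : ℂ)) • f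
      - ((t : ℂ) * (1 + (t : ℂ) ^ 2) *
          ((((q : ℤ) * ((p : ℤ) + 1) + ((q : ℤ) + 3) * ((p : ℤ) - 2) : ℤ)) : ℂ)) •
        Z1 (Z1 f)
      + ((t : ℂ) ^ 2) • Z1 (Z1 (Z1 (Z1 f))) := by
  set a : ℂ := (p : ℂ) with ha
  set b : ℂ := (q : ℂ) with hb
  have h00 : Eig a b f := ⟨euler_hol hf.1, euler_anti hf.2, hharm⟩
  have h10 : Eig (a - 1) (b + 1) (Z1 f) := eig_Z1 h00
  have h20 : Eig (a - 2) (b + 2) (Z1 (Z1 f)) := by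
    have := eig_Z1 h10
    rw [show a - 1 - 1 = a - 2 by ring, show b + 1 + 1 = b + 2 by ring] at this
    exact this
  have hc1 : Eig (a + 1) (b - 1) (Z1c f) := eig_Z1c h00
  have hc2 : Eig (a + 2) (b - 2) (Z1c (Z1c f)) := by
    have := eig_Z1c hc1
    rw [show a + 1 + 1 = a + 2 by ring, show b - 1 - 1 = b - 2 by ring] at this
    exact this
  have hA : Z1 (Z1c f) = (-(b * (a + 1))) • f := key1 h00
  have hB : Z1c (Z1 f) = (-(a * (b + 1))) • f := key2 h00
  have hC : Z1c (Z1 (Z1 (Z1 f))) = (-((a - 2) * (b + 2 + 1))) • Z1 (Z1 f) := key2 h20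
  have hD : Z1c (Z1 (Z1 f)) = (-((a - 1) * (b + 1 + 1))) • Z1 f := key2 h10
  have hE : Z1 (Z1c (Z1c f)) = (-((b - 1) * (a + 1 + 1))) • Z1c f := key1 hc1
  have hF : Z1 (Z1c (Z1c (Z1c f))) = (-((b - 2) * (a + 2 + 1))) • Z1c (Z1c f) := key1 hc2
  have hD1 : D1 t f = (b * (a + 1) + (t : ℂ) ^ 2 * (a * (b + 1))) • f
      + (-(t : ℂ)) • Z1 (Z1 f) + (-(t : ℂ)) • Z1c (Z1c f) := by
    simp only [D1, boxB, boxBbar, hA, hB]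
    module
  have hD2f : D2 t f = (a * (b + 1) + (t : ℂ) ^ 2 * (b * (a + 1))) • f
      + (-(t : ℂ)) • Z1 (Z1 f) + (-(t : ℂ)) • Z1c (Z1c f) := by
    simp only [D2, boxB, boxBbar, hA, hB]
    module
  have hD2u : D2 t (Z1 (Z1 f)) =
      ((a - 2) * (b + 3) + (t : ℂ) ^ 2 * ((a - 1) * (b + 2))) • Z1 (Z1 f)
      + (-(t : ℂ)) • Z1 (Z1 (Z1 (Z1 f)))
      + ((-(t : ℂ)) * ((a - 1) * (b + 2) * (a * (b + 1)))) • f := by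
    simp only [D2, boxB, boxBbar, hC, hD, Z1c_smul, Z1_smul, hB, smul_smul]
    module
  have hD2v : D2 t (Z1c (Z1c f)) =
      ((a + 2) * (b - 1) + (t : ℂ) ^ 2 * ((b - 2) * (a + 3))) • Z1c (Z1c f)
      + (-(t : ℂ)) • Z1c (Z1c (Z1c (Z1c f)))
      + ((-(t : ℂ)) * ((b - 1) * (a + 2) * (b * (a + 1)))) • f := by
    simp only [D2, boxB, boxBbar, hF, hE, Z1c_smul, Z1_smul, hA, smul_smul]
    module
  rw [Pt, hD1, D2_add, D2_add, D2_smul, D2_smul, D2_smul, hD2f, hD2u, hD2v, boxB, boxBbar,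
    hA, hB]
  match_scalars <;> push_cast <;> ring
end
end

section
/- Let k ≥ 1 be an integer, let t be a real number, and let 1 ≤ l ≤ k. Then the determinant of the l-th leading principal submatrix of M_k(t) (the upper-left l × l block) equals t^{2l} · c(3) · c(2l+3) · ∏_{i=1}^{l−1} c(2i+3)², where c(l) = (l−2)(2k−l+2). In particular, for t ≠ 0 this determinant is positive for 1 ≤ l ≤ k−1 and negative for l = k. -/
noncomputable section

/-- `c(l) = (l−2)(2k−l+2)` as a real number (for fixed `k`). -/
def ck (k : ℕ) (l : ℤ) : ℝ := (l - 2) * (2 * k - l + 2)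

/-- The real symmetric `k × k` matrix `M_k(t)` of `(1−t²)²` times the CR Paneitz operator of
the Rossi sphere `S³_t` in the orthonormal basis `v_i`. The index `i : Fin k` corresponds to
the paper's index `i + 1 ∈ {1, …, k}`. -/
def Mmat (k : ℕ) (t : ℝ) : Matrix (Fin k) (Fin k) ℝ :=
  Matrix.of fun i j =>
    let a : ℤ := min ((i : ℕ) : ℤ) ((j : ℕ) : ℤ) + 1
    if ((i : ℕ) : ℤ) = ((j : ℕ) : ℤ) then
      (1 + t ^ 2) ^ 2 * ck k (2 * a) * ck k (2 * a + 1) +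
        t ^ 2 * (ck k (2 * a - 2) * ck k (2 * a) + ck k (2 * a + 1) * ck k (2 * a + 3))
    else if (((i : ℕ) : ℤ) - ((j : ℕ) : ℤ)).natAbs = 1 then
      -t * (1 + t ^ 2) * (ck k (2 * a) + ck k (2 * a + 3)) *
        Real.sqrt (ck k (2 * a + 1) * ck k (2 * a + 2))
    else if (((i : ℕ) : ℤ) - ((j : ℕ) : ℤ)).natAbs = 2 then
      t ^ 2 * Real.sqrt (ck k (2 * a + 1) * ck k (2 * a + 2) * ck k (2 * a + 3) * ck k (2 * a + 4))
    else 0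

namespace MinorAux

/-- subdiagonal band value of the unit lower-triangular factor, column `m` (0-indexed). -/
def fband (k : ℕ) (t : ℝ) (m : ℕ) : ℝ :=
  -(1 + t ^ 2) / t * Real.sqrt (ck k (2 * (m : ℤ) + 3) * ck k (2 * (m : ℤ) + 4)) /
    ck k (2 * (m : ℤ) + 3)

/-- sub-subdiagonal band value of the unit lower-triangular factor, column `m`. -/
def gband (k : ℕ) (m : ℕ) : ℝ :=
  Real.sqrt (ck k (2 * (m : ℤ) + 3) * ck k (2 * (m : ℤ) + 4) * ck k (2 * (m : ℤ) + 5) *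
      ck k (2 * (m : ℤ) + 6)) / (ck k (2 * (m : ℤ) + 3) * ck k (2 * (m : ℤ) + 5))

def dpiv (k : ℕ) (t : ℝ) (m : ℕ) : ℝ := t ^ 2 * ck k (2 * (m : ℤ) + 3) * ck k (2 * (m : ℤ) + 5)

def bsup1 (k : ℕ) (t : ℝ) (m : ℕ) : ℝ :=
  -t * (1 + t ^ 2) * ck k (2 * (m : ℤ) + 5) *
    Real.sqrt (ck k (2 * (m : ℤ) + 3) * ck k (2 * (m : ℤ) + 4))

def bsup2 (k : ℕ) (t : ℝ) (m : ℕ) : ℝ :=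
  t ^ 2 * Real.sqrt (ck k (2 * (m : ℤ) + 3) * ck k (2 * (m : ℤ) + 4) * ck k (2 * (m : ℤ) + 5) *
      ck k (2 * (m : ℤ) + 6))

def Amat (k : ℕ) (t : ℝ) (l : ℕ) : Matrix (Fin l) (Fin l) ℝ :=
  Matrix.of fun i j =>
    if (i : ℕ) = (j : ℕ) then 1
    else if (i : ℕ) = (j : ℕ) + 1 then fband k t (j : ℕ)
    else if (i : ℕ) = (j : ℕ) + 2 then gband k (j : ℕ)
    else 0

def Bmat (k : ℕ) (t : ℝ) (l : ℕ) : Matrix (Fin l) (Fin l) ℝ :=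
  Matrix.of fun i j =>
    if (j : ℕ) = (i : ℕ) then dpiv k t (i : ℕ)
    else if (j : ℕ) = (i : ℕ) + 1 then bsup1 k t (i : ℕ)
    else if (j : ℕ) = (i : ℕ) + 2 then bsup2 k t (i : ℕ)
    else 0

lemma sum_shift {l : ℕ} (C : Fin l → ℝ) (a r : ℕ) (ha : a < l) :
    (∑ m : Fin l, if a = (m : ℕ) + r then C m else 0) =
      if h : r ≤ a then C ⟨a - r, lt_of_le_of_lt (Nat.sub_le a r) ha⟩ else 0 := by
  split_ifs with h
  · rw [Finset.sum_eq_single (⟨a - r, lt_of_le_of_lt (Nat.sub_le a r) ha⟩ : Fin l)]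
    · rw [if_pos (by simp; omega)]
    · intro b _ hb
      refine if_neg fun hc => hb (Fin.ext ?_)
      simp only []
      omega
    · intro hmem; exact absurd (Finset.mem_univ _) hmem
  · refine Finset.sum_eq_zero fun m _ => if_neg fun hc => ?_
    omega

lemma mul_apply_banded (k : ℕ) (t : ℝ) {l : ℕ} (i j : Fin l) :
    (Amat k t l * Bmat k t l) i j =
      Bmat k t l i j
      + (if h : 1 ≤ (i : ℕ) then
          fband k t ((i : ℕ) - 1) * Bmat k t l ⟨(i : ℕ) - 1, lt_of_le_of_lt (Nat.sub_le _ _) i.2⟩ j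
        else 0)
      + (if h : 2 ≤ (i : ℕ) then
          gband k ((i : ℕ) - 2) * Bmat k t l ⟨(i : ℕ) - 2, lt_of_le_of_lt (Nat.sub_le _ _) i.2⟩ j
        else 0) := by
  rw [Matrix.mul_apply]
  have key : ∀ m : Fin l, Amat k t l i m * Bmat k t l m j =
      (if (i : ℕ) = (m : ℕ) + 0 then Bmat k t l m j else 0)
      + (if (i : ℕ) = (m : ℕ) + 1 then fband k t (m : ℕ) * Bmat k t l m j else 0)
      + (if (i : ℕ) = (m : ℕ) + 2 then gband k (m : ℕ) * Bmat k t l m j else 0) := by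
    intro m
    simp only [Amat, Matrix.of_apply, Nat.add_zero]
    split_ifs <;> first | ring1 | (exfalso; omega)
  simp only [key]
  rw [Finset.sum_add_distrib, Finset.sum_add_distrib, sum_shift _ _ _ i.2, sum_shift _ _ _ i.2,
    sum_shift _ _ _ i.2]
  have h0 : (⟨(i : ℕ) - 0, lt_of_le_of_lt (Nat.sub_le _ _) i.2⟩ : Fin l) = i :=
    Fin.ext (by simp)
  rw [dif_pos (Nat.zero_le _), h0]

lemma ck_pos (k : ℕ) (x : ℤ) (h1 : 2 < x) (h2 : x < 2 * k + 2) : 0 < ck k x := by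
  unfold ck
  have h1' : (2 : ℝ) < (x : ℝ) := by exact_mod_cast h1
  have h2' : (x : ℝ) < 2 * k + 2 := by exact_mod_cast h2
  nlinarith

lemma ck_nonneg (k : ℕ) (x : ℤ) (h1 : 2 ≤ x) (h2 : x ≤ 2 * k + 2) : 0 ≤ ck k x := by
  unfold ck
  have h1' : (2 : ℝ) ≤ (x : ℝ) := by exact_mod_cast h1
  have h2' : (x : ℝ) ≤ 2 * k + 2 := by exact_mod_cast h2
  nlinarith

section prodlemmas
variable (k : ℕ) (t : ℝ) (m : ℕ)

lemma L1 (ht : t ≠ 0) (h3 : 0 < ck k (2*(m:ℤ)+3)) (h4 : 0 ≤ ck k (2*(m:ℤ)+4)) :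
    fband k t m * bsup1 k t m = (1+t^2)^2 * ck k (2*(m:ℤ)+4) * ck k (2*(m:ℤ)+5) := by
  unfold fband bsup1
  set c3 := ck k (2*(m:ℤ)+3)
  set c4 := ck k (2*(m:ℤ)+4)
  set c5 := ck k (2*(m:ℤ)+5)
  field_simp
  ring_nf
  simp only [Real.sq_sqrt h3.le, Real.sq_sqrt h4, Real.sq_sqrt (mul_nonneg h3.le h4)]

lemma Lsplit (h3 : 0 ≤ ck k (2*(m:ℤ)+3)) (h4 : 0 ≤ ck k (2*(m:ℤ)+4)) :
    Real.sqrt (ck k (2*(m:ℤ)+3) * ck k (2*(m:ℤ)+4) * ck k (2*(m:ℤ)+5) * ck k (2*(m:ℤ)+6))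
      = Real.sqrt (ck k (2*(m:ℤ)+3) * ck k (2*(m:ℤ)+4)) *
        Real.sqrt (ck k (2*(m:ℤ)+5) * ck k (2*(m:ℤ)+6)) := by
  rw [show ck k (2*(m:ℤ)+3) * ck k (2*(m:ℤ)+4) * ck k (2*(m:ℤ)+5) * ck k (2*(m:ℤ)+6)
      = (ck k (2*(m:ℤ)+3) * ck k (2*(m:ℤ)+4)) * (ck k (2*(m:ℤ)+5) * ck k (2*(m:ℤ)+6)) by ring,
    Real.sqrt_mul (by positivity)]

lemma L2 (h3 : 0 < ck k (2*(m:ℤ)+3)) (h4 : 0 ≤ ck k (2*(m:ℤ)+4))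
    (h5 : 0 < ck k (2*(m:ℤ)+5)) (h6 : 0 ≤ ck k (2*(m:ℤ)+6)) :
    gband k m * bsup2 k t m = t^2 * ck k (2*(m:ℤ)+4) * ck k (2*(m:ℤ)+6) := by
  unfold gband bsup2
  rw [Lsplit k m h3.le h4]
  set c3 := ck k (2*(m:ℤ)+3)
  set c4 := ck k (2*(m:ℤ)+4)
  set c5 := ck k (2*(m:ℤ)+5)
  set c6 := ck k (2*(m:ℤ)+6)
  field_simp
  ring_nf
  simp only [Real.sq_sqrt h3.le, Real.sq_sqrt h4, Real.sq_sqrt (mul_nonneg h3.le h4),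
    Real.sq_sqrt h5.le, Real.sq_sqrt h6, Real.sq_sqrt (mul_nonneg h5.le h6)]
  ring

lemma L3 (ht : t ≠ 0) (h3 : ck k (2*(m:ℤ)+3) ≠ 0) :
    fband k t m * dpiv k t m =
      -t * (1+t^2) * ck k (2*(m:ℤ)+5) * Real.sqrt (ck k (2*(m:ℤ)+3) * ck k (2*(m:ℤ)+4)) := by
  unfold fband dpiv
  field_simp

lemma L4 (ht : t ≠ 0) (h3 : 0 < ck k (2*(m:ℤ)+3)) (h4 : 0 ≤ ck k (2*(m:ℤ)+4))
    (h5 : ck k (2*(m:ℤ)+5) ≠ 0) :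
    gband k m * bsup1 k t m =
      -t * (1+t^2) * ck k (2*(m:ℤ)+4) * Real.sqrt (ck k (2*(m:ℤ)+5) * ck k (2*(m:ℤ)+6)) := by
  unfold gband bsup1
  rw [Lsplit k m h3.le h4]
  set c3 := ck k (2*(m:ℤ)+3)
  set c4 := ck k (2*(m:ℤ)+4)
  set c5 := ck k (2*(m:ℤ)+5)
  set c6 := ck k (2*(m:ℤ)+6)
  field_simp
  ring_nf
  simp only [Real.sq_sqrt h3.le, Real.sq_sqrt h4, Real.sq_sqrt (mul_nonneg h3.le h4)]

lemma L5 (h3 : ck k (2*(m:ℤ)+3) ≠ 0) (h5 : ck k (2*(m:ℤ)+5) ≠ 0) :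
    gband k m * dpiv k t m = bsup2 k t m := by
  unfold gband dpiv bsup2
  field_simp

lemma L6 (ht : t ≠ 0) (h3 : 0 < ck k (2*(m:ℤ)+3)) (h4 : 0 ≤ ck k (2*(m:ℤ)+4)) :
    fband k t m * bsup2 k t m =
      -t * (1+t^2) * ck k (2*(m:ℤ)+4) * Real.sqrt (ck k (2*(m:ℤ)+5) * ck k (2*(m:ℤ)+6)) := by
  unfold fband bsup2
  rw [Lsplit k m h3.le h4]
  set c3 := ck k (2*(m:ℤ)+3)
  set c4 := ck k (2*(m:ℤ)+4)
  set c5 := ck k (2*(m:ℤ)+5)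
  set c6 := ck k (2*(m:ℤ)+6)
  field_simp
  ring_nf
  simp only [Real.sq_sqrt h3.le, Real.sq_sqrt h4, Real.sq_sqrt (mul_nonneg h3.le h4)]

end prodlemmas

lemma entry_eq (k : ℕ) (t : ℝ) (ht : t ≠ 0) {l : ℕ} (hlk : l ≤ k) (i j : Fin l) :
    (Mmat k t).submatrix (Fin.castLE hlk) (Fin.castLE hlk) i j = (Amat k t l * Bmat k t l) i j := by
  rw [mul_apply_banded]
  rcases i with ⟨a, ha⟩
  rcases j with ⟨b, hb⟩
  simp only [Matrix.submatrix_apply, Mmat, Matrix.of_apply, Fin.coe_castLE, Bmat, Fin.val_mk]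
  by_cases hd : b = a
  · -- diagonal
    subst hd
    rw [if_pos rfl, if_pos rfl, min_self]
    rcases b with _ | _ | n
    · rw [dif_neg (by omega), dif_neg (by omega)]
      simp only [dpiv, ck]; push_cast; ring
    · rw [dif_pos (by omega), dif_neg (by omega)]
      norm_num
      rw [L1 k t 0 ht (ck_pos k _ (by norm_num) (by omega)) (ck_nonneg k _ (by norm_num) (by omega))]
      simp only [dpiv, ck]; push_cast; ring
    · rw [dif_pos (by omega), dif_pos (by omega),
        show n+1+1-1 = n+1 by omega, show n+1+1-2 = n by omega,
        if_neg (by omega), if_pos (by omega),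
        if_neg (by omega), if_neg (by omega), if_pos (by omega)]
      rw [L1 k t (n+1) ht (ck_pos k _ (by omega) (by omega)) (ck_nonneg k _ (by omega) (by omega)),
        L2 k t n (ck_pos k _ (by omega) (by omega)) (ck_nonneg k _ (by omega) (by omega))
          (ck_pos k _ (by omega) (by omega)) (ck_nonneg k _ (by omega) (by omega))]
      simp only [dpiv, ck]; push_cast; ring
  · by_cases h1 : b = a + 1
    · -- superdiagonal
      subst h1
      rw [if_neg (by omega), if_pos (by omega), min_eq_left (by omega),
        if_neg (by omega), if_pos rfl]
      rcases a with _ | n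
      · rw [dif_neg (by omega), dif_neg (by omega)]
        simp only [bsup1, ck]; push_cast; ring_nf
      · rw [dif_pos (by omega), show n+1-1 = n by omega,
          if_neg (by omega), if_neg (by omega), if_pos (by omega)]
        rw [L6 k t n ht (ck_pos k _ (by omega) (by omega)) (ck_nonneg k _ (by omega) (by omega))]
        by_cases h2 : 2 ≤ n + 1
        · rw [dif_pos h2, show n+1-2 = n-1 by omega,
            if_neg (by omega), if_neg (by omega), if_neg (by omega), mul_zero]
          simp only [bsup1, ck]; push_cast; ring_nf
        · rw [dif_neg h2]
          simp only [bsup1, ck]; push_cast; ring_nf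
    · by_cases h2 : b = a + 2
      · -- second superdiagonal
        subst h2
        rw [if_neg (by omega), if_neg (by omega), if_pos (by omega), min_eq_left (by omega),
          if_neg (by omega), if_neg (by omega), if_pos rfl]
        by_cases g1 : 1 ≤ a
        · rw [dif_pos g1, if_neg (by omega), if_neg (by omega), if_neg (by omega), mul_zero]
          by_cases g2 : 2 ≤ a
          · rw [dif_pos g2, if_neg (by omega), if_neg (by omega), if_neg (by omega), mul_zero]
            simp only [bsup2, ck]; push_cast; ring_nf
          · rw [dif_neg g2]
            simp only [bsup2, ck]; push_cast; ring_nf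
        · rw [dif_neg g1, dif_neg (by omega)]
          simp only [bsup2, ck]; push_cast; ring_nf
      · by_cases h3 : a = b + 1
        · -- subdiagonal
          subst h3
          rw [if_neg (by omega), if_pos (by omega), min_eq_right (by omega),
            if_neg (by omega), if_neg (by omega), if_neg (by omega)]
          rcases b with _ | n
          · rw [dif_pos (by omega), dif_neg (by omega)]
            norm_num
            rw [L3 k t 0 ht (ne_of_gt (ck_pos k _ (by norm_num) (by omega)))]
            simp only [ck]; push_cast; ring_nf
          · rw [dif_pos (by omega), show n+1+1-1 = n+1 by omega, if_pos rfl,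
              dif_pos (by omega), show n+1+1-2 = n by omega,
              if_neg (by omega), if_pos (by omega)]
            rw [L3 k t (n+1) ht (ne_of_gt (ck_pos k _ (by omega) (by omega))),
              L4 k t n ht (ck_pos k _ (by omega) (by omega)) (ck_nonneg k _ (by omega) (by omega))
                (ne_of_gt (ck_pos k _ (by omega) (by omega)))]
            simp only [ck]; push_cast; ring_nf
        · by_cases h4 : a = b + 2
          · -- second subdiagonal
            subst h4
            rw [if_neg (by omega), if_neg (by omega), if_pos (by omega),
              min_eq_right (by omega), if_neg (by omega), if_neg (by omega), if_neg (by omega),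
              dif_pos (by omega), show b+2-1 = b+1 by omega,
              if_neg (by omega), if_neg (by omega), if_neg (by omega), mul_zero,
              dif_pos (by omega), show b+2-2 = b by omega, if_pos rfl]
            rw [L5 k t b (ne_of_gt (ck_pos k _ (by omega) (by omega)))
              (ne_of_gt (ck_pos k _ (by omega) (by omega)))]
            simp only [bsup2, ck]; push_cast; ring_nf
          · -- far
            rw [if_neg (by omega), if_neg (by omega), if_neg (by omega),
              if_neg (by omega), if_neg (by omega), if_neg (by omega)]
            by_cases g1 : 1 ≤ a
            · by_cases g2 : 2 ≤ a
              · rw [dif_pos g1, dif_pos g2, if_neg (by omega), if_neg (by omega),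
                  if_neg (by omega), if_neg (by omega), if_neg (by omega), if_neg (by omega)]
                ring
              · rw [dif_pos g1, dif_neg g2, if_neg (by omega), if_neg (by omega),
                  if_neg (by omega)]
                ring
            · rw [dif_neg g1, dif_neg (by omega)]
              ring

lemma detA (k : ℕ) (t : ℝ) (l : ℕ) : (Amat k t l).det = 1 := by
  rw [Matrix.det_of_lowerTriangular (Amat k t l)]
  · exact Finset.prod_eq_one fun i _ => if_pos rfl
  · intro i j hij
    have hij' : (i : ℕ) < (j : ℕ) := hij
    simp only [Amat, Matrix.of_apply]
    rw [if_neg (by omega), if_neg (by omega), if_neg (by omega)]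

lemma detB (k : ℕ) (t : ℝ) (l : ℕ) :
    (Bmat k t l).det = ∏ i : Fin l, dpiv k t (i : ℕ) := by
  rw [Matrix.det_of_upperTriangular]
  · exact Finset.prod_congr rfl fun i _ => if_pos rfl
  · intro i j hij
    have hij' : (j : ℕ) < (i : ℕ) := hij
    simp only [Bmat, Matrix.of_apply]
    rw [if_neg (by omega), if_neg (by omega), if_neg (by omega)]

lemma prod_dpiv (k : ℕ) (t : ℝ) (l : ℕ) (hl1 : 1 ≤ l) :
    (∏ i : Fin l, dpiv k t (i : ℕ)) =
      t ^ (2 * l) * ck k 3 * ck k (2 * (l : ℤ) + 3) *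
        ∏ i ∈ Finset.Icc 1 (l - 1), (ck k (2 * (i : ℤ) + 3)) ^ 2 := by
  obtain ⟨m, rfl⟩ : ∃ m, l = m + 1 := ⟨l - 1, by omega⟩
  clear hl1
  induction m with
  | zero =>
    simp [dpiv]
  | succ n ih =>
    rw [Fin.prod_univ_castSucc]
    simp only [Fin.coe_castSucc, Fin.val_last]
    rw [ih]
    rw [show n + 1 + 1 - 1 = n + 1 by omega, show n + 1 - 1 = n by omega,
      Finset.prod_Icc_succ_top (by omega : 1 ≤ n + 1)]
    simp only [dpiv, ck]
    push_cast
    ring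


lemma det_formula (k : ℕ) (hk : 1 ≤ k) (t : ℝ) (l : ℕ) (hl1 : 1 ≤ l) (hlk : l ≤ k) :
    ((Mmat k t).submatrix (Fin.castLE hlk) (Fin.castLE hlk)).det =
      t ^ (2 * l) * ck k 3 * ck k (2 * (l : ℤ) + 3) *
        ∏ i ∈ Finset.Icc 1 (l - 1), (ck k (2 * (i : ℤ) + 3)) ^ 2 := by
  by_cases ht : t = 0
  · subst ht
    have hcol : ∀ i, (Mmat k 0).submatrix (Fin.castLE hlk) (Fin.castLE hlk) i ⟨0, by omega⟩ = 0 := by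
      intro i
      simp only [Matrix.submatrix_apply, Mmat, Matrix.of_apply, Fin.coe_castLE, Fin.val_mk,
        Nat.cast_zero]
      split_ifs with h1 h2 h3
      · rw [h1]
        norm_num [ck]
      · norm_num
      · norm_num
      · rfl
    rw [Matrix.det_eq_zero_of_column_eq_zero _ hcol, zero_pow (by omega : 2 * l ≠ 0)]
    ring
  · have hAB : (Mmat k t).submatrix (Fin.castLE hlk) (Fin.castLE hlk) = Amat k t l * Bmat k t l :=
      Matrix.ext fun i j => entry_eq k t ht hlk i j
    rw [hAB, Matrix.det_mul, detA, detB, one_mul, prod_dpiv k t l hl1]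

end MinorAux

open MinorAux

/-- the `l`-th leading principal minor of `M_k(t)` equals
`t^{2l} c(3) c(2l+3) ∏_{i=1}^{l−1} c(2i+3)²`; in particular for `t ≠ 0` it is positive
for `1 ≤ l ≤ k−1` and negative for `l = k`. -/
theorem leading_principal_minor_Mmat (k : ℕ) (hk : 1 ≤ k) (t : ℝ)
    (l : ℕ) (hl1 : 1 ≤ l) (hlk : l ≤ k) :
    ((Mmat k t).submatrix (Fin.castLE hlk) (Fin.castLE hlk)).det =
        t ^ (2 * l) * ck k 3 * ck k (2 * (l : ℤ) + 3) *
          ∏ i ∈ Finset.Icc 1 (l - 1), (ck k (2 * (i : ℤ) + 3)) ^ 2 ∧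
      (t ≠ 0 →
        (l ≤ k - 1 → 0 < ((Mmat k t).submatrix (Fin.castLE hlk) (Fin.castLE hlk)).det) ∧
        (l = k → ((Mmat k t).submatrix (Fin.castLE hlk) (Fin.castLE hlk)).det < 0)) := by
  have hdet := det_formula k hk t l hl1 hlk
  refine ⟨hdet, fun ht => ?_⟩
  have hprod : 0 < ∏ i ∈ Finset.Icc 1 (l - 1), (ck k (2 * (i : ℤ) + 3)) ^ 2 := by
    apply Finset.prod_pos
    intro i hi
    rw [Finset.mem_Icc] at hi
    have : 0 < ck k (2 * (i : ℤ) + 3) := ck_pos k _ (by omega) (by omega)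
    positivity
  have ht2 : 0 < t ^ (2 * l) := by
    rw [show 2 * l = l * 2 by ring, pow_mul]
    exact pow_two_pos_of_ne_zero (pow_ne_zero l ht)
  have hc3 : 0 < ck k 3 := ck_pos k 3 (by norm_num) (by omega)
  constructor
  · intro hlk1
    have hc2l : 0 < ck k (2 * (l : ℤ) + 3) := ck_pos k _ (by omega) (by omega)
    rw [hdet]
    exact mul_pos (mul_pos (mul_pos ht2 hc3) hc2l) hprod
  · intro hlk2
    subst hlk2
    have hneg : ck l (2 * (l : ℤ) + 3) < 0 := by
      unfold ck
      have h1 : (1 : ℝ) ≤ (l : ℝ) := by exact_mod_cast hl1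
      push_cast
      nlinarith
    rw [hdet]
    exact mul_neg_of_neg_of_pos (mul_neg_of_pos_of_neg (mul_pos ht2 hc3) hneg) hprod
end
end

section
/- Let k ≥ 1 be an integer and let t be a real number with 0 < |t| < 1. Then the real symmetric matrix M_k(t) has exactly one negative eigenvalue counted with multiplicity; that is, exactly one index i ∈ {1, …, k} for which the i-th eigenvalue (in Mathlib's eigenvalue enumeration for Hermitian matrices) is negative, and the remaining k−1 eigenvalues are positive. -/
noncomputable section

namespace Rossi
open Matrix


lemma ck_nonneg (k : ℕ) {l : ℤ} (h2 : 2 ≤ l) (h : l ≤ 2*k+2) : 0 ≤ ck k l := by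
  have h2' : (2:ℝ) ≤ (l:ℝ) := by exact_mod_cast h2
  have h' : (l:ℝ) ≤ 2*(k:ℝ)+2 := by exact_mod_cast h
  unfold ck
  apply mul_nonneg <;> linarith

lemma ck_pos (k : ℕ) {l : ℤ} (h2 : 2 < l) (h : l < 2*k+2) : 0 < ck k l := by
  have h2' : (2:ℝ) < (l:ℝ) := by exact_mod_cast h2
  have h' : (l:ℝ) < 2*(k:ℝ)+2 := by exact_mod_cast h
  unfold ck
  apply mul_pos <;> linarith

lemma ck_two (k : ℕ) : ck k 2 = 0 := by unfold ck; norm_num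

lemma sqrt_helper {x y z : ℝ} (hx : 0 ≤ x) (hy : 0 ≤ y) :
    Real.sqrt (x*y) * Real.sqrt (x*z) = x * Real.sqrt (y*z) := by
  rw [Real.sqrt_mul hx, Real.sqrt_mul hx, Real.sqrt_mul hy]
  have h1 : Real.sqrt x * Real.sqrt x = x := Real.mul_self_sqrt hx
  linear_combination (Real.sqrt y * Real.sqrt z) * h1

/-- entries of the factor matrix -/
def aa (k : ℕ) (p : ℤ) : ℝ := Real.sqrt (ck k (2*p) * ck k (2*p+1))
def bb (k : ℕ) (p : ℤ) : ℝ := Real.sqrt (ck k (2*p+1) * ck k (2*p+3))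
def gg (k : ℕ) (p : ℤ) : ℝ := Real.sqrt (ck k (2*p-2) * ck k (2*p))

lemma aa_sq (k : ℕ) {p : ℤ} (h1 : 1 ≤ p) (h2 : p ≤ (k:ℤ)) :
    aa k p * aa k p = ck k (2*p) * ck k (2*p+1) :=
  Real.mul_self_sqrt (mul_nonneg (ck_nonneg k (by omega) (by omega))
    (ck_nonneg k (by omega) (by omega)))

lemma bb_sq (k : ℕ) {p : ℤ} (h1 : 1 ≤ p) (h2 : p ≤ (k:ℤ)-1) :
    bb k p * bb k p = ck k (2*p+1) * ck k (2*p+3) :=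
  Real.mul_self_sqrt (mul_nonneg (ck_nonneg k (by omega) (by omega))
    (ck_nonneg k (by omega) (by omega)))

lemma gg_sq (k : ℕ) {p : ℤ} (h1 : 2 ≤ p) (h2 : p ≤ (k:ℤ)) :
    gg k p * gg k p = ck k (2*p-2) * ck k (2*p) :=
  Real.mul_self_sqrt (mul_nonneg (ck_nonneg k (by omega) (by omega))
    (ck_nonneg k (by omega) (by omega)))

lemma bb_pos (k : ℕ) {p : ℤ} (h1 : 1 ≤ p) (h2 : p ≤ (k:ℤ)-1) : 0 < bb k p :=
  Real.sqrt_pos.2 (mul_pos (ck_pos k (by omega) (by omega)) (ck_pos k (by omega) (by omega)))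

lemma aa_one (k : ℕ) : aa k 1 = 0 := by
  have h0 : ck k (2*1) = 0 := by unfold ck; norm_num
  unfold aa; rw [h0, zero_mul, Real.sqrt_zero]

lemma gg_two (k : ℕ) : gg k 2 = 0 := by
  have h0 : ck k (2*2-2) = 0 := by unfold ck; norm_num
  unfold gg; rw [h0, zero_mul, Real.sqrt_zero]

lemma gg_kp1 (k : ℕ) : gg k ((k:ℤ)+1) = 0 := by
  have h0 : ck k (2*((k:ℤ)+1)) = 0 := by unfold ck; push_cast; ring
  unfold gg; rw [h0, mul_zero, Real.sqrt_zero]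

lemma amulg (k : ℕ) {p : ℤ} (h1 : 1 ≤ p) (h2 : p+1 ≤ (k:ℤ)) :
    aa k p * gg k (p+1) = ck k (2*p) * Real.sqrt (ck k (2*p+1) * ck k (2*p+2)) := by
  unfold aa gg
  rw [show 2*(p+1)-2 = 2*p by ring, show 2*(p+1) = 2*p+2 by ring]
  exact sqrt_helper (ck_nonneg k (by omega) (by omega)) (ck_nonneg k (by omega) (by omega))

lemma bmula (k : ℕ) {p : ℤ} (h1 : 1 ≤ p) (h2 : p+1 ≤ (k:ℤ)) :
    bb k p * aa k (p+1) = ck k (2*p+3) * Real.sqrt (ck k (2*p+1) * ck k (2*p+2)) := by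
  unfold aa bb
  rw [show 2*(p+1)+1 = 2*p+3 by ring, show 2*(p+1) = 2*p+2 by ring,
    mul_comm (ck k (2*p+1)) (ck k (2*p+3)), mul_comm (ck k (2*p+2)) (ck k (2*p+3))]
  exact sqrt_helper (ck_nonneg k (by omega) (by omega)) (ck_nonneg k (by omega) (by omega))

lemma bmulg (k : ℕ) {p : ℤ} (h1 : 1 ≤ p) (h2 : p+2 ≤ (k:ℤ)) :
    bb k p * gg k (p+2) =
      Real.sqrt (ck k (2*p+1) * ck k (2*p+2) * ck k (2*p+3) * ck k (2*p+4)) := by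
  unfold bb gg
  rw [show 2*(p+2)-2 = 2*p+2 by ring, show 2*(p+2) = 2*p+4 by ring,
    ← Real.sqrt_mul (mul_nonneg (ck_nonneg k (by omega) (by omega))
      (ck_nonneg k (by omega) (by omega)))]
  congr 1
  ring

lemma sum_if_eq (k : ℕ) (c : ℕ) (x : ℝ) :
    (∑ l : Fin k, if (l:ℕ) = c then x else 0) = if c < k then x else 0 := by
  by_cases h : c < k
  · rw [if_pos h]
    rw [Finset.sum_eq_single (⟨c, h⟩ : Fin k)]
    · rw [if_pos rfl]
    · intro b _ hb
      rw [if_neg]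
      intro hbc
      exact hb (Fin.ext hbc)
    · intro hmem; exact absurd (Finset.mem_univ _) hmem
  · rw [if_neg h]
    apply Finset.sum_eq_zero
    intro l _
    have := l.2
    rw [if_neg (by omega)]

lemma sum_if_eq' (k : ℕ) (c : ℕ) (x : ℝ) :
    (∑ l : Fin k, if (l:ℕ)+1 = c then x else 0) = if 1 ≤ c ∧ c ≤ k then x else 0 := by
  by_cases h : 1 ≤ c ∧ c ≤ k
  · rw [if_pos h]
    rw [Finset.sum_eq_single (⟨c-1, by omega⟩ : Fin k)]
    · rw [if_pos (by simp; omega)]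
    · intro b _ hb
      rw [if_neg]
      intro hbc
      exact hb (Fin.ext (by simp; omega))
    · intro hmem; exact absurd (Finset.mem_univ _) hmem
  · rw [if_neg h]
    apply Finset.sum_eq_zero
    intro l _
    have := l.2
    rw [if_neg (by omega)]

def Amat (k : ℕ) (t : ℝ) : Matrix (Fin k) (Fin k) ℝ :=
  Matrix.of fun l i =>
    if (l:ℕ) = (i:ℕ) then (1+t^2) * aa k (((i:ℕ):ℤ)+1)
    else if (l:ℕ) = (i:ℕ)+1 then -t * bb k (((i:ℕ):ℤ)+1)
    else if (l:ℕ)+1 = (i:ℕ) then -t * gg k (((i:ℕ):ℤ)+1)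
    else 0

def sval (k : ℕ) (t : ℝ) : ℝ := t^2*(2*(k:ℝ)-1)*(2*(k:ℝ)+1)

def Emat (k : ℕ) (t : ℝ) : Matrix (Fin k) (Fin k) ℝ :=
  Matrix.of fun i j => if (i:ℕ) = k-1 ∧ (j:ℕ) = k-1 then sval k t else 0

set_option maxHeartbeats 1000000 in
lemma entry (k : ℕ) (t : ℝ) (i j : Fin k) (hij : (i:ℕ) ≤ (j:ℕ)) :
    ((Amat k t)ᵀ * Amat k t) i j = Mmat k t i j + Emat k t i j := by
  have hi2 := i.2
  have hj2 := j.2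
  rw [Matrix.mul_apply]
  simp only [Matrix.transpose_apply]
  by_cases hd : (j:ℕ) = (i:ℕ)
  · -- diagonal
    have hji : i = j := (Fin.ext hd).symm
    subst hji
    have hpt : ∀ l : Fin k, Amat k t l i * Amat k t l i =
        (if (l:ℕ) = (i:ℕ) then ((1+t^2) * aa k (((i:ℕ):ℤ)+1)) * ((1+t^2) * aa k (((i:ℕ):ℤ)+1)) else 0)
        + (if (l:ℕ) = (i:ℕ)+1 then (-t * bb k (((i:ℕ):ℤ)+1)) * (-t * bb k (((i:ℕ):ℤ)+1)) else 0)
        + (if (l:ℕ)+1 = (i:ℕ) then (-t * gg k (((i:ℕ):ℤ)+1)) * (-t * gg k (((i:ℕ):ℤ)+1)) else 0) := by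
      intro l
      simp only [Amat, Matrix.of_apply]
      split_ifs <;> first | ring1 | (exfalso; omega)
    rw [Finset.sum_congr rfl (fun l _ => hpt l), Finset.sum_add_distrib, Finset.sum_add_distrib,
      sum_if_eq, sum_if_eq, sum_if_eq', if_pos hi2]
    simp only [Mmat, Emat, Matrix.of_apply, min_self, if_pos rfl, ite_true, if_true]
    have haa := aa_sq k (p := ((i:ℕ):ℤ)+1) (by omega) (by omega)
    by_cases hb : (i:ℕ)+1 < k
    · rw [if_pos hb]
      have hbb := bb_sq k (p := ((i:ℕ):ℤ)+1) (by omega) (by omega)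
      by_cases hg : 1 ≤ (i:ℕ)
      · rw [if_pos ⟨hg, by omega⟩, if_neg (by omega : ¬((i:ℕ) = k-1 ∧ (i:ℕ) = k-1))]
        have hgg := gg_sq k (p := ((i:ℕ):ℤ)+1) (by omega) (by omega)
        linear_combination (1+t^2)^2 * haa + t^2 * hbb + t^2 * hgg
      · rw [if_neg (by omega : ¬(1 ≤ (i:ℕ) ∧ (i:ℕ) ≤ k)), if_neg (by omega : ¬((i:ℕ) = k-1 ∧ (i:ℕ) = k-1))]
        have hc0 : ck k (2*(((i:ℕ):ℤ)+1)-2) * ck k (2*(((i:ℕ):ℤ)+1)) = 0 := by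
          have e : ((i:ℕ):ℤ) = 0 := by omega
          rw [e]
          have : ck k (2*((0:ℤ)+1)) = 0 := by unfold ck; norm_num
          rw [this, mul_zero]
        linear_combination (1+t^2)^2 * haa + t^2 * hbb - t^2 * hc0
    · rw [if_neg hb]
      have hc : ck k (2*(((i:ℕ):ℤ)+1)+1) * ck k (2*(((i:ℕ):ℤ)+1)+3)
          = -((2*(k:ℝ)-1)*(2*(k:ℝ)+1)) := by
        have e : ((i:ℕ):ℤ)+1 = (k:ℤ) := by omega
        rw [e]; unfold ck; push_cast; ring
      by_cases hg : 1 ≤ (i:ℕ)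
      · rw [if_pos ⟨hg, by omega⟩, if_pos ⟨by omega, by omega⟩]
        have hgg := gg_sq k (p := ((i:ℕ):ℤ)+1) (by omega) (by omega)
        simp only [sval]
        linear_combination (1+t^2)^2 * haa + t^2 * hgg - t^2 * hc
      · rw [if_neg (by omega : ¬(1 ≤ (i:ℕ) ∧ (i:ℕ) ≤ k)), if_pos ⟨by omega, by omega⟩]
        have hc0 : ck k (2*(((i:ℕ):ℤ)+1)-2) * ck k (2*(((i:ℕ):ℤ)+1)) = 0 := by
          have e : ((i:ℕ):ℤ) = 0 := by omega
          rw [e]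
          have : ck k (2*((0:ℤ)+1)) = 0 := by unfold ck; norm_num
          rw [this, mul_zero]
        simp only [sval]
        linear_combination (1+t^2)^2 * haa - t^2 * hc0 - t^2 * hc
  · by_cases hd1 : (j:ℕ) = (i:ℕ)+1
    · -- first off-diagonal
      have hpt : ∀ l : Fin k, Amat k t l i * Amat k t l j =
          (if (l:ℕ) = (i:ℕ) then ((1+t^2) * aa k (((i:ℕ):ℤ)+1)) * (-t * gg k (((j:ℕ):ℤ)+1)) else 0)
          + (if (l:ℕ) = (i:ℕ)+1 then (-t * bb k (((i:ℕ):ℤ)+1)) * ((1+t^2) * aa k (((j:ℕ):ℤ)+1)) else 0) := by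
        intro l
        simp only [Amat, Matrix.of_apply]
        split_ifs <;> first | ring1 | (exfalso; omega)
      rw [Finset.sum_congr rfl (fun l _ => hpt l), Finset.sum_add_distrib,
        sum_if_eq, sum_if_eq, if_pos hi2, if_pos (by omega : (i:ℕ)+1 < k)]
      simp only [Mmat, Emat, Matrix.of_apply]
      rw [min_eq_left (by omega : ((i:ℕ):ℤ) ≤ ((j:ℕ):ℤ)),
        if_neg (by omega : ¬((i:ℕ):ℤ) = ((j:ℕ):ℤ)),
        if_pos (by omega : (((i:ℕ):ℤ) - ((j:ℕ):ℤ)).natAbs = 1),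
        if_neg (by omega : ¬((i:ℕ) = k-1 ∧ (j:ℕ) = k-1)),
        show ((j:ℕ):ℤ) = ((i:ℕ):ℤ)+1 by omega]
      have hag := amulg k (p := ((i:ℕ):ℤ)+1) (by omega) (by omega)
      have hba := bmula k (p := ((i:ℕ):ℤ)+1) (by omega) (by omega)
      linear_combination (-(t*(1+t^2))) * hag + (-(t*(1+t^2))) * hba
    · by_cases hd2 : (j:ℕ) = (i:ℕ)+2
      · -- second off-diagonal
        have hpt : ∀ l : Fin k, Amat k t l i * Amat k t l j =
            (if (l:ℕ) = (i:ℕ)+1 then (-t * bb k (((i:ℕ):ℤ)+1)) * (-t * gg k (((j:ℕ):ℤ)+1)) else 0) := by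
          intro l
          simp only [Amat, Matrix.of_apply]
          split_ifs <;> first | ring1 | (exfalso; omega)
        rw [Finset.sum_congr rfl (fun l _ => hpt l), sum_if_eq, if_pos (by omega : (i:ℕ)+1 < k)]
        simp only [Mmat, Emat, Matrix.of_apply]
        rw [min_eq_left (by omega : ((i:ℕ):ℤ) ≤ ((j:ℕ):ℤ)),
          if_neg (by omega : ¬((i:ℕ):ℤ) = ((j:ℕ):ℤ)),
          if_neg (by omega : ¬(((i:ℕ):ℤ) - ((j:ℕ):ℤ)).natAbs = 1),
          if_pos (by omega : (((i:ℕ):ℤ) - ((j:ℕ):ℤ)).natAbs = 2),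
          if_neg (by omega : ¬((i:ℕ) = k-1 ∧ (j:ℕ) = k-1)),
          show ((j:ℕ):ℤ) = ((i:ℕ):ℤ)+2 by omega,
          show ((i:ℕ):ℤ)+2+1 = ((i:ℕ):ℤ)+1+2 by ring]
        have hbg := bmulg k (p := ((i:ℕ):ℤ)+1) (by omega) (by omega)
        linear_combination t^2 * hbg
      · -- far
        have hpt : ∀ l : Fin k, Amat k t l i * Amat k t l j = 0 := by
          intro l
          simp only [Amat, Matrix.of_apply]
          split_ifs <;> first | ring1 | (exfalso; omega)
        rw [Finset.sum_congr rfl (fun l _ => hpt l), Finset.sum_const_zero]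
        simp only [Mmat, Emat, Matrix.of_apply]
        rw [if_neg (by omega : ¬((i:ℕ):ℤ) = ((j:ℕ):ℤ)),
          if_neg (by omega : ¬(((i:ℕ):ℤ) - ((j:ℕ):ℤ)).natAbs = 1),
          if_neg (by omega : ¬(((i:ℕ):ℤ) - ((j:ℕ):ℤ)).natAbs = 2),
          if_neg (by omega : ¬((i:ℕ) = k-1 ∧ (j:ℕ) = k-1))]
        norm_num

/-- extension of a vector by zero -/
def vext (k : ℕ) (v : Fin k → ℝ) (n : ℕ) : ℝ := if h : n < k then v ⟨n,h⟩ else 0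

lemma row0 (k : ℕ) (t : ℝ) (r : Fin k) (hr : (r:ℕ) = 0) (v : Fin k → ℝ) :
    (Amat k t *ᵥ v) r = 0 := by
  have hA : ∀ i : Fin k, Amat k t r i = 0 := by
    intro i
    simp only [Amat, Matrix.of_apply]
    split_ifs with h1 h2 h3
    · rw [show ((i:ℕ):ℤ)+1 = 1 by omega, aa_one, mul_zero]
    · exfalso; omega
    · rw [show ((i:ℕ):ℤ)+1 = 2 by omega, gg_two, mul_zero]
    · rfl
  simp only [Matrix.mulVec, dotProduct]
  exact Finset.sum_eq_zero fun i _ => by rw [hA i, zero_mul]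

lemma row_eq (k : ℕ) (t : ℝ) (r : Fin k) (hr : 1 ≤ (r:ℕ)) (v : Fin k → ℝ) :
    (Amat k t *ᵥ v) r = (1+t^2) * aa k (((r:ℕ):ℤ)+1) * vext k v (r:ℕ)
      - t * bb k ((r:ℕ):ℤ) * vext k v ((r:ℕ)-1)
      - t * gg k (((r:ℕ):ℤ)+2) * vext k v ((r:ℕ)+1) := by
  have hr2 := r.2
  have hpt : ∀ i : Fin k, Amat k t r i * v i =
      (if (i:ℕ) = (r:ℕ) then (1+t^2) * aa k (((r:ℕ):ℤ)+1) * vext k v (r:ℕ) else 0)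
    + (if (i:ℕ)+1 = (r:ℕ) then -t * bb k ((r:ℕ):ℤ) * vext k v ((r:ℕ)-1) else 0)
    + (if (i:ℕ) = (r:ℕ)+1 then -t * gg k (((r:ℕ):ℤ)+2) * vext k v ((r:ℕ)+1) else 0) := by
    intro i
    have hv : v i = vext k v (i:ℕ) := by
      simp only [vext]
      rw [dif_pos i.2, Fin.eta]
    simp only [Amat, Matrix.of_apply]
    split_ifs with h1 h2 h3 <;>
      first
        | (exfalso; omega)
        | (rw [hv, show ((i:ℕ):ℤ) = ((r:ℕ):ℤ) from by omega,
            show (i:ℕ) = (r:ℕ) from by omega]; ring1)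
        | (rw [hv, show ((i:ℕ):ℤ)+1 = ((r:ℕ):ℤ) from by omega,
            show (i:ℕ) = (r:ℕ)-1 from by omega]; ring1)
        | (rw [hv, show ((i:ℕ):ℤ)+1 = ((r:ℕ):ℤ)+2 from by omega,
            show (i:ℕ) = (r:ℕ)+1 from by omega]; ring1)
        | ring1
  simp only [Matrix.mulVec, dotProduct]
  rw [Finset.sum_congr rfl (fun i _ => hpt i), Finset.sum_add_distrib, Finset.sum_add_distrib,
    sum_if_eq, sum_if_eq', sum_if_eq, if_pos hr2, if_pos (show 1 ≤ (r:ℕ) ∧ (r:ℕ) ≤ k by omega)]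
  by_cases hrk : (r:ℕ)+1 < k
  · rw [if_pos hrk]; ring
  · rw [if_neg hrk]
    have hz : vext k v ((r:ℕ)+1) = 0 := by simp only [vext]; rw [dif_neg (by omega)]
    rw [hz]; ring

/-- kernel vector recursion: `(Fv j).2` is the value at position `k-1-j`,
`(Fv j).1` the value at position `k-j` (`0` for `j = 0`). -/
def Fv (k : ℕ) (t : ℝ) : ℕ → ℝ × ℝ
  | 0 => (0, 1)
  | (j+1) => ((Fv k t j).2,
      ((1+t^2) * aa k ((k:ℤ)-j) * (Fv k t j).2 - t * gg k ((k:ℤ)+1-j) * (Fv k t j).1)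
        / (t * bb k ((k:ℤ)-1-j)))

def kv (k : ℕ) (t : ℝ) : Fin k → ℝ := fun m => (Fv k t (k-1-(m:ℕ))).2

lemma kv_vext (k : ℕ) (t : ℝ) (n : ℕ) (hn : n < k) :
    vext k (kv k t) n = (Fv k t (k-1-n)).2 := by
  simp only [vext]; rw [dif_pos hn]; rfl

lemma kv_last (k : ℕ) (hk : 1 ≤ k) (t : ℝ) : kv k t ⟨k-1, by omega⟩ = 1 := by
  show (Fv k t (k-1-(k-1))).2 = 1
  rw [Nat.sub_self]
  rfl

lemma Akv (k : ℕ) (hk : 1 ≤ k) (t : ℝ) (ht : t ≠ 0) : Amat k t *ᵥ kv k t = 0 := by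
  funext r
  rw [Pi.zero_apply]
  by_cases hr : (r:ℕ) = 0
  · exact row0 k t r hr _
  · have hr2 := r.2
    rw [row_eq k t r (by omega) (kv k t)]
    set j : ℕ := k-1-(r:ℕ) with hj
    have e1 : vext k (kv k t) (r:ℕ) = (Fv k t j).2 := kv_vext k t _ r.2
    have e2 : vext k (kv k t) ((r:ℕ)-1) = (Fv k t (j+1)).2 := by
      rw [kv_vext k t _ (by omega), show k-1-((r:ℕ)-1) = j+1 from by omega]
    have e3 : vext k (kv k t) ((r:ℕ)+1) = (Fv k t j).1 := by
      by_cases h : (r:ℕ)+1 < k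
      · rw [kv_vext k t _ h, show k-1-((r:ℕ)+1) = j-1 from by omega]
        obtain ⟨jj, hjj⟩ : ∃ jj, j = jj+1 := ⟨j-1, by omega⟩
        rw [hjj, show jj+1-1 = jj from rfl]
        rfl
      · simp only [vext]; rw [dif_neg (by omega)]
        rw [show j = 0 from by omega]
        rfl
    rw [e1, e2, e3,
      show ((r:ℕ):ℤ)+1 = (k:ℤ)-(j:ℤ) from by omega,
      show ((r:ℕ):ℤ)+2 = (k:ℤ)+1-(j:ℤ) from by omega,
      show ((r:ℕ):ℤ) = (k:ℤ)-1-(j:ℤ) from by omega]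
    have hbb : bb k ((k:ℤ)-1-(j:ℤ)) ≠ 0 := ne_of_gt (bb_pos k (by omega) (by omega))
    simp only [Fv]
    field_simp
    ring

lemma kerz (k : ℕ) (hk : 1 ≤ k) (t : ℝ) (ht : t ≠ 0) (v : Fin k → ℝ)
    (hv : Amat k t *ᵥ v = 0) (h0 : v ⟨k-1, by omega⟩ = 0) : v = 0 := by
  have key : ∀ d : ℕ, vext k v (k-1-d) = 0 := by
    intro d
    induction d using Nat.strong_induction_on with
    | _ d ih =>
      rcases Nat.eq_zero_or_pos d with hd | hd
      · subst hd
        simp only [vext]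
        rw [dif_pos (by omega : k-1-0 < k)]
        simpa using h0
      · by_cases hsat : k-1-d = k-1-(d-1)
        · rw [hsat]; exact ih (d-1) (by omega)
        · have hrlt : k-1-d+1 < k := by omega
          set r : Fin k := ⟨k-1-d+1, hrlt⟩ with hrdef
          have hrv : (r:ℕ) = k-1-d+1 := rfl
          have hre := row_eq k t r (by omega) v
          rw [hv, Pi.zero_apply] at hre
          have hv1 : vext k v ((r:ℕ)) = 0 := by
            rw [hrv, show k-1-d+1 = k-1-(d-1) from by omega]
            exact ih (d-1) (by omega)
          have hv2 : vext k v ((r:ℕ)+1) = 0 := by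
            by_cases h2 : (r:ℕ)+1 < k
            · rw [hrv, show k-1-d+1+1 = k-1-(d-2) from by omega]
              exact ih (d-2) (by omega)
            · simp only [vext]; rw [dif_neg (by omega)]
          have hbb : bb k ((r:ℕ):ℤ) ≠ 0 :=
            ne_of_gt (bb_pos k (by omega) (by omega))
          have hX : t * bb k ((r:ℕ):ℤ) * vext k v ((r:ℕ)-1) = 0 := by
            rw [hv1, hv2] at hre
            linear_combination hre
          have hz : vext k v ((r:ℕ)-1) = 0 := by
            rcases mul_eq_zero.1 hX with h | h
            · rcases mul_eq_zero.1 h with h' | h'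
              · exact absurd h' ht
              · exact absurd h' hbb
            · exact h
          rw [hrv, show k-1-d+1-1 = k-1-d from by omega] at hz
          exact hz
  funext m
  have hm := key (k-1-(m:ℕ))
  rw [show k-1-(k-1-(m:ℕ)) = (m:ℕ) from by omega] at hm
  simp only [vext] at hm
  rw [dif_pos m.2, Fin.eta] at hm
  simpa using hm

lemma sval_pos (k : ℕ) (hk : 1 ≤ k) (t : ℝ) (ht : t ≠ 0) : 0 < sval k t := by
  have h1 : 0 < t^2 := by positivity
  have h2 : (1:ℝ) ≤ (k:ℝ) := by exact_mod_cast hk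
  have h3 : (0:ℝ) < 2*(k:ℝ)-1 := by linarith
  have h4 : (0:ℝ) < 2*(k:ℝ)+1 := by linarith
  unfold sval
  exact mul_pos (mul_pos h1 h3) h4

lemma Mmat_symm (k : ℕ) (t : ℝ) (i j : Fin k) : Mmat k t j i = Mmat k t i j := by
  simp only [Mmat, Matrix.of_apply, min_comm (((j:ℕ)):ℤ) (((i:ℕ)):ℤ)]
  by_cases h1 : ((i:ℕ):ℤ) = ((j:ℕ):ℤ)
  · rw [if_pos h1, if_pos h1.symm]
  · rw [if_neg (fun hh => h1 hh.symm), if_neg h1]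
    by_cases h2 : (((i:ℕ):ℤ) - ((j:ℕ):ℤ)).natAbs = 1
    · rw [if_pos h2, if_pos (show (((j:ℕ):ℤ) - ((i:ℕ):ℤ)).natAbs = 1 from by omega)]
    · rw [if_neg (show ¬(((j:ℕ):ℤ) - ((i:ℕ):ℤ)).natAbs = 1 from by omega), if_neg h2]
      by_cases h3 : (((i:ℕ):ℤ) - ((j:ℕ):ℤ)).natAbs = 2
      · rw [if_pos h3, if_pos (show (((j:ℕ):ℤ) - ((i:ℕ):ℤ)).natAbs = 2 from by omega)]
      · rw [if_neg (show ¬(((j:ℕ):ℤ) - ((i:ℕ):ℤ)).natAbs = 2 from by omega), if_neg h3]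

lemma Emat_symm (k : ℕ) (t : ℝ) (i j : Fin k) : Emat k t j i = Emat k t i j := by
  simp only [Emat, Matrix.of_apply]
  by_cases h : ((i:ℕ) = k-1 ∧ (j:ℕ) = k-1)
  · rw [if_pos ⟨h.2, h.1⟩, if_pos h]
  · rw [if_neg (fun hh => h ⟨hh.2, hh.1⟩), if_neg h]

lemma entry_all (k : ℕ) (t : ℝ) (i j : Fin k) :
    ((Amat k t)ᵀ * Amat k t) i j = Mmat k t i j + Emat k t i j := by
  rcases le_total (i:ℕ) (j:ℕ) with h | h
  · exact entry k t i j h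
  · have h2 := entry k t j i h
    rw [Matrix.mul_apply] at h2 ⊢
    simp only [Matrix.transpose_apply] at h2 ⊢
    rw [Finset.sum_congr rfl (fun l _ => mul_comm (Amat k t l i) (Amat k t l j)), h2,
      Mmat_symm, Emat_symm]

lemma decompose (k : ℕ) (t : ℝ) :
    Mmat k t = (Amat k t)ᵀ * Amat k t - Emat k t := by
  ext i j
  rw [Matrix.sub_apply, entry_all]
  ring

lemma qE (k : ℕ) (hk : 1 ≤ k) (t : ℝ) (v : Fin k → ℝ) :
    v ⬝ᵥ (Emat k t *ᵥ v) = sval k t * (v ⟨k-1, by omega⟩)^2 := by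
  have hmv : ∀ i : Fin k, (Emat k t *ᵥ v) i
      = if (i:ℕ) = k-1 then sval k t * v ⟨k-1, by omega⟩ else 0 := by
    intro i
    simp only [Matrix.mulVec, dotProduct, Emat, Matrix.of_apply]
    by_cases hi : (i:ℕ) = k-1
    · rw [if_pos hi, Finset.sum_eq_single (⟨k-1, by omega⟩ : Fin k)]
      · rw [if_pos ⟨hi, rfl⟩]
      · intro b _ hb
        rw [if_neg, zero_mul]
        rintro ⟨-, hb2⟩
        exact hb (Fin.ext hb2)
      · intro h; exact absurd (Finset.mem_univ _) h
    · rw [if_neg hi]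
      apply Finset.sum_eq_zero
      intro b _
      rw [if_neg (fun hc => hi hc.1), zero_mul]
  simp only [dotProduct, hmv]
  rw [Finset.sum_eq_single (⟨k-1, by omega⟩ : Fin k)]
  · rw [if_pos rfl]; ring
  · intro b _ hb
    rw [if_neg, mul_zero]
    intro hbc; exact hb (Fin.ext hbc)
  · intro h; exact absurd (Finset.mem_univ _) h

lemma qform (k : ℕ) (hk : 1 ≤ k) (t : ℝ) (v : Fin k → ℝ) :
    v ⬝ᵥ (Mmat k t *ᵥ v)
      = (Amat k t *ᵥ v) ⬝ᵥ (Amat k t *ᵥ v) - sval k t * (v ⟨k-1, by omega⟩)^2 := by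
  rw [decompose k t, Matrix.sub_mulVec, dotProduct_sub, qE k hk t v]
  congr 1
  rw [← Matrix.mulVec_mulVec, Matrix.dotProduct_mulVec, Matrix.vecMul_transpose]

lemma dot_self_nonneg {k : ℕ} (x : Fin k → ℝ) : 0 ≤ x ⬝ᵥ x :=
  Finset.sum_nonneg fun m _ => mul_self_nonneg _


end Rossi

open Matrix Rossi
open scoped RealInnerProductSpace

/-- for `0 < |t| < 1`, the real symmetric matrix `M_k(t)` has exactly one
negative eigenvalue, and its remaining `k − 1` eigenvalues are positive. -/
theorem Mmat_exactly_one_negative_eigenvalue (k : ℕ) (hk : 1 ≤ k) (t : ℝ)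
    (ht0 : 0 < |t|) (ht1 : |t| < 1) (hM : (Mmat k t).IsHermitian) :
    ∃ i : Fin k, hM.eigenvalues i < 0 ∧ ∀ j : Fin k, j ≠ i → 0 < hM.eigenvalues j := by
  classical
  have ht : t ≠ 0 := abs_pos.mp ht0
  have hsv := sval_pos k hk t ht
  -- there is a negative eigenvalue
  have hexists : ∃ i, hM.eigenvalues i < 0 := by
    by_contra hcon
    push_neg at hcon
    have hpsd := hM.posSemidef_iff_eigenvalues_nonneg.mpr (fun i => hcon i)
    have h2 := hpsd.dotProduct_mulVec_nonneg (kv k t)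
    rw [star_trivial, qform k hk t (kv k t), Akv k hk t ht, kv_last k hk t] at h2
    simp only [zero_dotProduct, one_pow, mul_one, zero_sub] at h2
    linarith
  -- at most one nonpositive eigenvalue
  have hboth : ∀ i j : Fin k, i ≠ j → hM.eigenvalues i ≤ 0 → hM.eigenvalues j ≤ 0 → False := by
    intro i j hij hli hlj
    set u : Fin k → ℝ := ⇑(hM.eigenvectorBasis i) with hudef
    set w : Fin k → ℝ := ⇑(hM.eigenvectorBasis j) with hwdef
    have hMu : Mmat k t *ᵥ u = hM.eigenvalues i • u := hM.mulVec_eigenvectorBasis i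
    have hMw : Mmat k t *ᵥ w = hM.eigenvalues j • w := hM.mulVec_eigenvectorBasis j
    have horth := orthonormal_iff_ite.mp hM.eigenvectorBasis.orthonormal
    have huu : (∑ m, u m * u m) = 1 := by
      have h := horth i i
      rw [EuclideanSpace.inner_eq_star_dotProduct] at h
      simpa [dotProduct] using h
    have hww : (∑ m, w m * w m) = 1 := by
      have h := horth j j
      rw [EuclideanSpace.inner_eq_star_dotProduct] at h
      simpa [dotProduct] using h
    have huw : (∑ m, u m * w m) = 0 := by
      have h := horth i j
      rw [EuclideanSpace.inner_eq_star_dotProduct] at h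
      simpa [dotProduct, hij, mul_comm] using h
    set lst : Fin k := ⟨k-1, by omega⟩ with hlst
    obtain ⟨a, b, hab, habl⟩ : ∃ a b : ℝ, (a ≠ 0 ∨ b ≠ 0) ∧ a * u lst + b * w lst = 0 := by
      by_cases hw0 : w lst = 0
      · exact ⟨0, 1, Or.inr one_ne_zero, by simp [hw0]⟩
      · exact ⟨1, -(u lst)/(w lst), Or.inl one_ne_zero, by field_simp; ring⟩
    set z : Fin k → ℝ := fun m => a * u m + b * w m with hzdef
    have hzl : z lst = 0 := habl
    have hMz : Mmat k t *ᵥ z = fun m => a * (hM.eigenvalues i * u m) + b * (hM.eigenvalues j * w m) := by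
      have hz2 : z = a • u + b • w := by
        funext m
        simp [hzdef, smul_eq_mul]
      rw [hz2, Matrix.mulVec_add, Matrix.mulVec_smul, Matrix.mulVec_smul, hMu, hMw]
      funext m
      simp only [Pi.add_apply, Pi.smul_apply, smul_eq_mul]
      try ring
    have hQz : z ⬝ᵥ (Mmat k t *ᵥ z)
        = hM.eigenvalues i * a^2 + hM.eigenvalues j * b^2 := by
      rw [hMz]
      simp only [dotProduct, hzdef]
      calc (∑ m, (a * u m + b * w m) * (a * (hM.eigenvalues i * u m) + b * (hM.eigenvalues j * w m)))
          = hM.eigenvalues i * a^2 * (∑ m, u m * u m) + hM.eigenvalues j * b^2 * (∑ m, w m * w m)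
            + (a*b*(hM.eigenvalues i + hM.eigenvalues j)) * (∑ m, u m * w m) := by
            rw [Finset.mul_sum, Finset.mul_sum, Finset.mul_sum, ← Finset.sum_add_distrib,
              ← Finset.sum_add_distrib]
            exact Finset.sum_congr rfl fun m _ => by ring
        _ = hM.eigenvalues i * a^2 + hM.eigenvalues j * b^2 := by
            rw [huu, hww, huw]; ring
    have hqf := qform k hk t z
    rw [hQz, hzl] at hqf
    have hAz : Amat k t *ᵥ z = 0 := by
      have hnn : 0 ≤ (Amat k t *ᵥ z) ⬝ᵥ (Amat k t *ᵥ z) := dot_self_nonneg _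
      have hle : (Amat k t *ᵥ z) ⬝ᵥ (Amat k t *ᵥ z) ≤ 0 := by
        nlinarith [sq_nonneg a, sq_nonneg b, mul_nonpos_of_nonpos_of_nonneg hli (sq_nonneg a),
          mul_nonpos_of_nonpos_of_nonneg hlj (sq_nonneg b)]
      exact dotProduct_self_eq_zero.mp (le_antisymm hle hnn)
    have hz0 : z = 0 := kerz k hk t ht z hAz hzl
    have hcu : (∑ m, u m * z m) = a := by
      simp only [hzdef]
      calc (∑ m, u m * (a * u m + b * w m))
          = a * (∑ m, u m * u m) + b * (∑ m, u m * w m) := by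
            rw [Finset.mul_sum, Finset.mul_sum, ← Finset.sum_add_distrib]
            exact Finset.sum_congr rfl fun m _ => by ring
        _ = a := by rw [huu, huw]; ring
    have hcw : (∑ m, w m * z m) = b := by
      simp only [hzdef]
      calc (∑ m, w m * (a * u m + b * w m))
          = a * (∑ m, u m * w m) + b * (∑ m, w m * w m) := by
            rw [Finset.mul_sum, Finset.mul_sum, ← Finset.sum_add_distrib]
            exact Finset.sum_congr rfl fun m _ => by ring
        _ = b := by rw [hww, huw]; ring
    rcases hab with ha | hb
    · apply ha
      rw [← hcu, hz0]
      simp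
    · apply hb
      rw [← hcw, hz0]
      simp
  obtain ⟨i, hi⟩ := hexists
  refine ⟨i, hi, fun j hj => ?_⟩
  by_contra hc
  push_neg at hc
  exact hboth i j (fun h => hj (h ▸ rfl)) hi.le hc
end
end

section
/- For every real number t, the 2 × 2 real symmetric matrix M_2(t) (explicitly, M_2(t) = [[9t², −6√3·t(1+t²)], [−6√3·t(1+t²), 12(1+t²)² − 15t²]]) satisfies det( M_2(t) + 3t²·I ) = 36 t² (1 − t²)². -/
noncomputable section

/-- `M_2(t) = [[9t², −6√3 t(1+t²)], [−6√3 t(1+t²), 12(1+t²)² − 15t²]]` and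
`det(M_2(t) + 3t² I) = 36 t² (1 − t²)²`. -/
theorem det_Mmat_two_add_smul_one (t : ℝ) :
    Mmat 2 t = Matrix.of !![9 * t ^ 2, -6 * Real.sqrt 3 * t * (1 + t ^ 2);
        -6 * Real.sqrt 3 * t * (1 + t ^ 2), 12 * (1 + t ^ 2) ^ 2 - 15 * t ^ 2] ∧
      (Mmat 2 t + (3 * t ^ 2) • (1 : Matrix (Fin 2) (Fin 2) ℝ)).det =
        36 * t ^ 2 * (1 - t ^ 2) ^ 2 := by
  have h12 : Real.sqrt 12 = 2 * Real.sqrt 3 := by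
    rw [show (12:ℝ) = 2^2 * 3 by norm_num, Real.sqrt_mul (by positivity), Real.sqrt_sq (by norm_num)]
  have hof : ∀ (A : Matrix (Fin 2) (Fin 2) ℝ) (i j : Fin 2), Matrix.of A i j = A i j := fun _ _ _ => rfl
  have hM : Mmat 2 t = Matrix.of !![9 * t ^ 2, -6 * Real.sqrt 3 * t * (1 + t ^ 2);
      -6 * Real.sqrt 3 * t * (1 + t ^ 2), 12 * (1 + t ^ 2) ^ 2 - 15 * t ^ 2] := by
    ext i j
    fin_cases i <;> fin_cases j <;>
      simp only [Mmat, Matrix.of_apply, hof] <;> norm_num [ck, h12] <;> ring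
  refine ⟨hM, ?_⟩
  rw [hM]
  have h3 : Real.sqrt 3 ^ 2 = 3 := Real.sq_sqrt (by norm_num)
  rw [show (Matrix.of !![9 * t ^ 2, -6 * Real.sqrt 3 * t * (1 + t ^ 2);
      -6 * Real.sqrt 3 * t * (1 + t ^ 2), 12 * (1 + t ^ 2) ^ 2 - 15 * t ^ 2]
      + (3 * t ^ 2) • (1 : Matrix (Fin 2) (Fin 2) ℝ)) =
      !![9 * t ^ 2 + 3 * t ^ 2, -6 * Real.sqrt 3 * t * (1 + t ^ 2);
      -6 * Real.sqrt 3 * t * (1 + t ^ 2), 12 * (1 + t ^ 2) ^ 2 - 15 * t ^ 2 + 3 * t ^ 2] by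
    ext i j; fin_cases i <;> fin_cases j <;> simp [Matrix.one_apply, hof]]
  rw [Matrix.det_fin_two_of]
  nlinarith [h3, sq_nonneg t]
end
end
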